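/- arXiv:1306.5404 — 9 statements merged into one kernel-verified Lean document; each statement's English description precedes it below -/
import Mathlib

section
/- Let (Σ,d) be a compact metric space and μ a Borel measure on Σ with μ(B_r(x)) > 0 for every x ∈ Σ and r > 0. Let δ > 0, θ > 0 and k, l ∈ ℕ with k ≥ l. Then there exist δ̄ > 0 and θ̄ > 0, depending only on (Σ,d,μ), δ, θ, k and l (in particular not on the functions and sets below), with the following property. Whenever f₁, f₂ : Σ → [0,∞) are μ-integrable with ∫_Σ f₁ dμ = ∫_Σ f₂ dμ = 1, and Ω_{1,0},…,Ω_{1,k} and Ω_{2,0},…,Ω_{2,l} are Borel subsets of Σ satisfying d(Ω_{1,i}, Ω_{1,i'}) ≥ δ for all i ≠ i', d(Ω_{2,j}, Ω_{2,j'}) ≥ δ for all j ≠ j', ∫_{Ω_{1,i}} f₁ dμ ≥ θ for all i ∈ {0,…,k}, and ∫_{Ω_{2,j}} f₂ dμ ≥ θ for all j ∈ {0,…,l}, there exist Borel sets Ω₀,…,Ω_k ⊆ Σ such that: d(Ω_n, Ω_{n'}) ≥ δ̄ for all n ≠ n'; μ(Ω_n) ≥ θ̄ for all n ∈ {0,…,k};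 ∫_{Ω_n} f₁ dμ ≥ θ̄ for all n ∈ {0,…,k}; and ∫_{Ω_n} f₂ dμ ≥ θ̄ for all n ∈ {0,…,l}. -/
open MeasureTheory Metric
lemma my_setIntegral_mono_set' {S : Type*} [MeasurableSpace S] {μ : Measure S}
    {g : S → ℝ} (hg : ∀ x, 0 ≤ g x) (hgi : Integrable g μ)
    {A B : Set S} (hAB : A ⊆ B) :
    ∫ x in A, g x ∂μ ≤ ∫ x in B, g x ∂μ :=
  setIntegral_mono_set hgi.integrableOn
    (Filter.Eventually.of_forall hg) (HasSubset.Subset.eventuallyLE hAB)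

lemma my_setIntegral_union_le {S : Type*} [MeasurableSpace S] {μ : Measure S}
    {g : S → ℝ} (hg : ∀ x, 0 ≤ g x) (hgi : Integrable g μ)
    {A B : Set S} (hA : MeasurableSet A) (hB : MeasurableSet B) :
    ∫ x in A ∪ B, g x ∂μ ≤ ∫ x in A, g x ∂μ + ∫ x in B, g x ∂μ := by
  have h1 : A ∪ B = A ∪ (B \ A) := by rw [Set.union_diff_self]
  rw [h1, setIntegral_union disjoint_sdiff_self_right (hB.diff hA)
    hgi.integrableOn hgi.integrableOn]
  have := my_setIntegral_mono_set' hg hgi (Set.diff_subset (s := B) (t := A))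
  linarith

lemma my_setIntegral_biUnion_le {S : Type*} [MeasurableSpace S] {μ : Measure S}
    {g : S → ℝ} (hg : ∀ x, 0 ≤ g x) (hgi : Integrable g μ)
    {ι : Type*} (s : Finset ι) {A : ι → Set S} (hA : ∀ i, MeasurableSet (A i)) :
    ∫ x in (⋃ i ∈ s, A i), g x ∂μ ≤ ∑ i ∈ s, ∫ x in A i, g x ∂μ := by
  classical
  refine Finset.induction_on s (by simp) ?_
  intro a s' ha ih
  rw [Finset.sum_insert ha, Finset.set_biUnion_insert]
  have h2 : MeasurableSet (⋃ i ∈ s', A i) :=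
    MeasurableSet.biUnion s'.countable_toSet (fun i _ => hA i)
  calc ∫ x in A a ∪ ⋃ i ∈ s', A i, g x ∂μ
      ≤ ∫ x in A a, g x ∂μ + ∫ x in ⋃ i ∈ s', A i, g x ∂μ :=
        my_setIntegral_union_le hg hgi (hA a) h2
    _ ≤ _ := by linarith

lemma my_pigeon {S : Type*} [MetricSpace S] [MeasurableSpace S] [BorelSpace S] {μ : Measure S} {g : S → ℝ}
    (hg : ∀ x, 0 ≤ g x) (hgi : Integrable g μ)
    {Ωs : Set S} (hΩ : MeasurableSet Ωs)
    {θ : ℝ} (hθ : 0 < θ) (hint : θ ≤ ∫ x in Ωs, g x ∂μ)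
    (T : Finset S) (hT : T.Nonempty) {r : ℝ}
    (hcov : ∀ x : S, ∃ t ∈ T, x ∈ Metric.ball t r) :
    ∃ t ∈ T, θ / T.card ≤ ∫ x in Ωs ∩ Metric.ball t r, g x ∂μ := by
  by_contra hcon
  push_neg at hcon
  have hcard : (0:ℝ) < T.card := by exact_mod_cast hT.card_pos
  have hΩeq : Ωs = ⋃ t ∈ T, (Ωs ∩ Metric.ball t r) := by
    ext x
    simp only [Set.mem_iUnion, Set.mem_inter_iff, exists_prop]
    constructor
    · intro hx
      obtain ⟨t, htT, hxt⟩ := hcov x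
      exact ⟨t, htT, hx, hxt⟩
    · rintro ⟨t, -, hx, -⟩; exact hx
  have h1 : ∫ x in (⋃ t ∈ T, Ωs ∩ Metric.ball t r), g x ∂μ
      ≤ ∑ t ∈ T, ∫ x in Ωs ∩ Metric.ball t r, g x ∂μ :=
    my_setIntegral_biUnion_le hg hgi T (fun t => hΩ.inter measurableSet_ball)
  rw [← hΩeq] at h1
  have h2 : ∑ t ∈ T, ∫ x in Ωs ∩ Metric.ball t r, g x ∂μ
      < ∑ _t ∈ T, θ / T.card :=
    Finset.sum_lt_sum_of_nonempty hT (fun t ht => hcon t ht)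
  rw [Finset.sum_const, nsmul_eq_mul, mul_div_cancel₀ _ (ne_of_gt hcard)] at h2
  linarith

lemma my_ball_lb {S : Type*} [MetricSpace S] [CompactSpace S] [MeasurableSpace S]
    [BorelSpace S] (μ : Measure S)
    (hμ : ∀ (x : S) (r : ℝ), 0 < r → 0 < μ (Metric.ball x r))
    [Nonempty S] {r : ℝ} (hr : 0 < r) :
    ∃ c : ℝ, 0 < c ∧ ∀ x, ENNReal.ofReal c ≤ μ (Metric.ball x r) := by
  obtain ⟨t, -, htf, hcov⟩ := finite_cover_balls_of_compact (s := (Set.univ : Set S)) isCompact_univ (half_pos hr)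
  classical
  set T := htf.toFinset with hTdef
  have hcov' : ∀ x : S, ∃ t' ∈ T, x ∈ Metric.ball t' (r/2) := by
    intro x
    have := hcov (Set.mem_univ x)
    simp only [Set.mem_iUnion, exists_prop] at this
    obtain ⟨y, hy, hxy⟩ := this
    exact ⟨y, htf.mem_toFinset.2 hy, hxy⟩
  have hT : T.Nonempty := by
    obtain ⟨x⟩ := ‹Nonempty S›
    obtain ⟨y, hy, -⟩ := hcov' x
    exact ⟨y, hy⟩
  set m : ENNReal := T.inf' hT (fun t' => μ (Metric.ball t' (r/2))) with hmdef
  have hm : 0 < m := by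
    rw [hmdef, Finset.lt_inf'_iff]
    exact fun t' _ => hμ t' _ (half_pos hr)
  have hmin_ne : min m 1 ≠ ⊤ := by
    exact ne_top_of_le_ne_top ENNReal.one_ne_top (min_le_right _ _)
  refine ⟨(min m 1).toReal, ?_, ?_⟩
  · refine ENNReal.toReal_pos ?_ hmin_ne
    intro h
    rcases min_eq_iff.1 h with ⟨h1, -⟩ | ⟨h1, -⟩
    · exact hm.ne' h1
    · exact one_ne_zero h1
  · intro x
    rw [ENNReal.ofReal_toReal hmin_ne]
    obtain ⟨t', ht'T, hxt'⟩ := hcov' x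
    have hsub : Metric.ball t' (r/2) ⊆ Metric.ball x r := by
      intro y hy
      rw [Metric.mem_ball] at *
      have h3 := dist_triangle y t' x
      have h4 : dist t' x < r / 2 := by rw [dist_comm]; exact hxt'
      linarith
    calc min m 1 ≤ m := min_le_left _ _
      _ ≤ μ (Metric.ball t' (r/2)) := Finset.inf'_le _ ht'T
      _ ≤ μ (Metric.ball x r) := measure_mono hsub
lemma my_extend_injOn {k l : ℕ} (hkl : l ≤ k) (M : Finset (Fin (l+1)))
    (m : Fin (l+1) → Fin (k+1)) (hm : Set.InjOn m M) :
    ∃ σ : Fin (k+1) → Fin (k+1), Function.Injective σ ∧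
      ∀ j ∈ M, σ (Fin.castLE (Nat.succ_le_succ hkl) j) = m j := by
  classical
  set cst : Fin (l+1) → Fin (k+1) := Fin.castLE (Nat.succ_le_succ hkl) with hcst
  have hcinj : Function.Injective cst := Fin.castLE_injective _
  set D : Finset (Fin (k+1)) := M.image cst with hD
  set R : Finset (Fin (k+1)) := M.image m with hR
  have hcard : Fintype.card ↥(Dᶜ) = Fintype.card ↥(Rᶜ) := by
    rw [Fintype.card_coe, Fintype.card_coe, Finset.card_compl, Finset.card_compl,
      Finset.card_image_of_injective _ hcinj, Finset.card_image_of_injOn hm]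
  have e : ↥(Dᶜ) ≃ ↥(Rᶜ) := Fintype.equivOfCardEq hcard
  have hch : ∀ {n : Fin (k+1)} (h : n ∈ D),
      (Finset.mem_image.1 h).choose ∈ M ∧ cst (Finset.mem_image.1 h).choose = n :=
    fun h => (Finset.mem_image.1 h).choose_spec
  set σ : Fin (k+1) → Fin (k+1) := fun n =>
    if h : n ∈ D then m (Finset.mem_image.1 h).choose
    else (e ⟨n, Finset.mem_compl.2 h⟩ : Fin (k+1)) with hσ
  have hσD : ∀ {n : Fin (k+1)} (h : n ∈ D), σ n = m (Finset.mem_image.1 h).choose := by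
    intro n h; simp only [hσ, dif_pos h]
  have hσC : ∀ {n : Fin (k+1)} (h : n ∉ D), σ n = (e ⟨n, Finset.mem_compl.2 h⟩ : Fin (k+1)) := by
    intro n h; simp only [hσ, dif_neg h]
  refine ⟨σ, ?_, ?_⟩
  · intro n n' hnn'
    by_cases hn : n ∈ D <;> by_cases hn' : n' ∈ D
    · rw [hσD hn, hσD hn'] at hnn'
      have ha := hch hn; have ha' := hch hn'
      have := hm ha.1 ha'.1 hnn'
      rw [← ha.2, ← ha'.2, this]
    · exfalso
      have h1 : σ n ∈ R := by rw [hσD hn]; exact Finset.mem_image_of_mem m (hch hn).1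
      have h2 : σ n' ∉ R := by
        rw [hσC hn']
        exact Finset.mem_compl.1 (e ⟨n', Finset.mem_compl.2 hn'⟩).2
      rw [hnn'] at h1; exact h2 h1
    · exfalso
      have h1 : σ n' ∈ R := by rw [hσD hn']; exact Finset.mem_image_of_mem m (hch hn').1
      have h2 : σ n ∉ R := by
        rw [hσC hn]
        exact Finset.mem_compl.1 (e ⟨n, Finset.mem_compl.2 hn⟩).2
      rw [← hnn'] at h1; exact h2 h1
    · rw [hσC hn, hσC hn'] at hnn'
      have := e.injective (Subtype.coe_injective hnn')
      exact congrArg Subtype.val this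
  · intro j hj
    have hn : cst j ∈ D := Finset.mem_image_of_mem cst hj
    rw [hσD hn]
    congr 1
    exact hcinj (hch hn).2

/-- covering lemma: on a compact metric space with a Borel measure positive on
balls, if `f₁` concentrates mass `θ` on `k+1` sets that are `δ`-separated and `f₂` on `l+1`
such sets, then there are `k+1` sets, `δ̄`-separated and of measure at least `θ̄`, on each of
which `f₁` has mass at least `θ̄`, and on the first `l+1` of which `f₂` has mass at least
`θ̄`; here `δ̄, θ̄ > 0` depend only on the space, the measure, `δ`, `θ`, `k` and `l`. -/
theorem covering_lemma (S : Type*) [MetricSpace S] [CompactSpace S]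
    [MeasurableSpace S] [BorelSpace S] (μ : Measure S)
    (hμ : ∀ (x : S) (r : ℝ), 0 < r → 0 < μ (Metric.ball x r))
    (δ θ : ℝ) (hδ : 0 < δ) (hθ : 0 < θ) (k l : ℕ) (hkl : l ≤ k) :
    ∃ δb θb : ℝ, 0 < δb ∧ 0 < θb ∧
      ∀ f₁ f₂ : S → ℝ, (∀ x, 0 ≤ f₁ x) → (∀ x, 0 ≤ f₂ x) →
        Integrable f₁ μ → Integrable f₂ μ →
        (∫ x, f₁ x ∂μ) = 1 → (∫ x, f₂ x ∂μ) = 1 →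
        ∀ (Ω₁ : Fin (k + 1) → Set S) (Ω₂ : Fin (l + 1) → Set S),
          (∀ i, MeasurableSet (Ω₁ i)) → (∀ j, MeasurableSet (Ω₂ j)) →
          (∀ i i', i ≠ i' → ∀ x ∈ Ω₁ i, ∀ y ∈ Ω₁ i', δ ≤ dist x y) →
          (∀ j j', j ≠ j' → ∀ x ∈ Ω₂ j, ∀ y ∈ Ω₂ j', δ ≤ dist x y) →
          (∀ i, θ ≤ ∫ x in Ω₁ i, f₁ x ∂μ) →
          (∀ j, θ ≤ ∫ x in Ω₂ j, f₂ x ∂μ) →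
          ∃ Ω : Fin (k + 1) → Set S,
            (∀ n, MeasurableSet (Ω n)) ∧
            (∀ n n', n ≠ n' → ∀ x ∈ Ω n, ∀ y ∈ Ω n', δb ≤ dist x y) ∧
            (∀ n, ENNReal.ofReal θb ≤ μ (Ω n)) ∧
            (∀ n, θb ≤ ∫ x in Ω n, f₁ x ∂μ) ∧
            (∀ n : Fin (k + 1), (n : ℕ) ≤ l → θb ≤ ∫ x in Ω n, f₂ x ∂μ) := by
  classical
  rcases isEmpty_or_nonempty S with hS | hS
  · refine ⟨1, 1, one_pos, one_pos, ?_⟩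
    intro f₁ f₂ _ _ _ _ h1 _ _ _ _ _ _ _ _ _
    rw [μ.eq_zero_of_isEmpty] at h1
    simp at h1
  · have hr : (0:ℝ) < δ/16 := by linarith
    obtain ⟨tset, -, htf, hcovset⟩ :=
      finite_cover_balls_of_compact (s := (Set.univ : Set S)) isCompact_univ hr
    set T := htf.toFinset with hTdef
    have hcov : ∀ x : S, ∃ t' ∈ T, x ∈ Metric.ball t' (δ/16) := by
      intro x
      have := hcovset (Set.mem_univ x)
      simp only [Set.mem_iUnion, exists_prop] at this
      obtain ⟨y, hy, hxy⟩ := this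
      exact ⟨y, htf.mem_toFinset.2 hy, hxy⟩
    have hT : T.Nonempty := by
      obtain ⟨x⟩ := hS
      obtain ⟨y, hy, -⟩ := hcov x
      exact ⟨y, hy⟩
    have hN : (0:ℝ) < T.card := by exact_mod_cast hT.card_pos
    obtain ⟨c, hc, hcb⟩ := my_ball_lb μ hμ hr
    have hθN : 0 < θ / T.card := div_pos hθ hN
    refine ⟨δ/8, min (θ / T.card) c, by linarith, lt_min hθN hc, ?_⟩
    intro f₁ f₂ hf₁ hf₂ hif₁ hif₂ _ _ Ω₁ Ω₂ hmeas₁ hmeas₂ hsep₁ hsep₂ hint₁ hint₂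
    choose t₁ ht₁T ht₁ using fun i =>
      my_pigeon hf₁ hif₁ (hmeas₁ i) hθ (hint₁ i) T hT hcov
    choose t₂ ht₂T ht₂ using fun j =>
      my_pigeon hf₂ hif₂ (hmeas₂ j) hθ (hint₂ j) T hT hcov
    have hne₁ : ∀ i, ∃ a, a ∈ Ω₁ i ∩ Metric.ball (t₁ i) (δ/16) := by
      intro i
      rcases Set.eq_empty_or_nonempty (Ω₁ i ∩ Metric.ball (t₁ i) (δ/16)) with h | h
      · exfalso
        have h2 := ht₁ i
        rw [h] at h2
        simp only [Measure.restrict_empty, integral_zero_measure] at h2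
        linarith
      · exact h
    have hne₂ : ∀ j, ∃ a, a ∈ Ω₂ j ∩ Metric.ball (t₂ j) (δ/16) := by
      intro j
      rcases Set.eq_empty_or_nonempty (Ω₂ j ∩ Metric.ball (t₂ j) (δ/16)) with h | h
      · exfalso
        have h2 := ht₂ j
        rw [h] at h2
        simp only [Measure.restrict_empty, integral_zero_measure] at h2
        linarith
      · exact h
    have hsepT₁ : ∀ i i', i ≠ i' → 7*δ/8 ≤ dist (t₁ i) (t₁ i') := by
      intro i i' hii'
      obtain ⟨a, haΩ, hab⟩ := hne₁ i
      obtain ⟨a', haΩ', hab'⟩ := hne₁ i'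
      have h1 := hsep₁ i i' hii' a haΩ a' haΩ'
      have h2 := dist_triangle4 a (t₁ i) (t₁ i') a'
      rw [Metric.mem_ball] at hab hab'
      have h3 : dist (t₁ i') a' < δ/16 := by rw [dist_comm]; exact hab'
      linarith
    have hsepT₂ : ∀ j j', j ≠ j' → 7*δ/8 ≤ dist (t₂ j) (t₂ j') := by
      intro j j' hjj'
      obtain ⟨a, haΩ, hab⟩ := hne₂ j
      obtain ⟨a', haΩ', hab'⟩ := hne₂ j'
      have h1 := hsep₂ j j' hjj' a haΩ a' haΩ'
      have h2 := dist_triangle4 a (t₂ j) (t₂ j') a'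
      rw [Metric.mem_ball] at hab hab'
      have h3 : dist (t₂ j') a' < δ/16 := by rw [dist_comm]; exact hab'
      linarith
    -- matching
    set M : Finset (Fin (l+1)) :=
      Finset.univ.filter (fun j => ∃ i, dist (t₁ i) (t₂ j) < δ/4) with hM
    set mf : Fin (l+1) → Fin (k+1) :=
      fun j => if h : ∃ i, dist (t₁ i) (t₂ j) < δ/4 then h.choose else 0 with hmf
    have hmatch : ∀ j, (∃ i, dist (t₁ i) (t₂ j) < δ/4) →
        dist (t₁ (mf j)) (t₂ j) < δ/4 := by
      intro j hj
      simp only [hmf, dif_pos hj]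
      exact hj.choose_spec
    have hMP : ∀ j, j ∈ M ↔ ∃ i, dist (t₁ i) (t₂ j) < δ/4 := by
      intro j; simp [hM]
    have hinjM : Set.InjOn mf M := by
      intro j hj j' hj' hjj'
      by_contra hne
      have h1 := hmatch j ((hMP j).1 hj)
      have h2 := hmatch j' ((hMP j').1 hj')
      have h3 := hsepT₂ j j' hne
      have h4 := dist_triangle (t₂ j) (t₁ (mf j')) (t₂ j')
      have h5 : dist (t₂ j) (t₁ (mf j')) < δ/4 := by
        rw [← hjj', dist_comm]; exact h1
      linarith
    obtain ⟨σ, hσinj, hσ⟩ := my_extend_injOn hkl M mf hinjM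
    -- the cross separation
    have hcross : ∀ (a : Fin (k+1)) (j : Fin (l+1)),
        a ≠ σ (Fin.castLE (Nat.succ_le_succ hkl) j) → δ/4 ≤ dist (t₁ a) (t₂ j) := by
      intro a j hne
      by_cases hj : ∃ i, dist (t₁ i) (t₂ j) < δ/4
      · have hjM : j ∈ M := (hMP j).2 hj
        have h1 := hσ j hjM
        have h2 := hmatch j hj
        have h3 : a ≠ mf j := by rw [← h1]; exact hne
        have h4 := hsepT₁ a (mf j) h3
        have h5 := dist_triangle (t₁ a) (t₂ j) (t₁ (mf j))
        have h6 : dist (t₂ j) (t₁ (mf j)) < δ/4 := by rw [dist_comm]; exact h2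
        linarith
      · push_neg at hj
        exact hj a
    -- ball separation helper
    have hball : ∀ (p q : S) (D : ℝ), D ≤ dist p q →
        ∀ x ∈ Metric.ball p (δ/16), ∀ y ∈ Metric.ball q (δ/16),
          D - δ/8 ≤ dist x y := by
      intro p q D hD x hx y hy
      rw [Metric.mem_ball] at hx hy
      have h1 := dist_triangle4 p x y q
      have h2 : dist p x < δ/16 := by rw [dist_comm]; exact hx
      linarith
    set Ω : Fin (k+1) → Set S := fun n =>
      Metric.ball (t₁ (σ n)) (δ/16) ∪
        ⋃ (h : (n:ℕ) ≤ l), Metric.ball (t₂ ⟨(n:ℕ), Nat.lt_succ_of_le h⟩) (δ/16) with hΩ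
    have hcast : ∀ (n : Fin (k+1)) (h : (n:ℕ) ≤ l),
        Fin.castLE (Nat.succ_le_succ hkl) (⟨(n:ℕ), Nat.lt_succ_of_le h⟩ : Fin (l+1)) = n := by
      intro n h
      apply Fin.ext
      rfl
    refine ⟨Ω, ?_, ?_, ?_, ?_, ?_⟩
    · intro n
      exact measurableSet_ball.union (MeasurableSet.iUnion fun h => measurableSet_ball)
    · intro n n' hnn' x hx y hy
      simp only [hΩ, Set.mem_union, Set.mem_iUnion] at hx hy
      rcases hx with hx | ⟨hnl, hx⟩ <;> rcases hy with hy | ⟨hn'l, hy⟩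
      · have h1 := hball _ _ _ (hsepT₁ (σ n) (σ n') (hσinj.ne hnn')) x hx y hy
        linarith
      · have hne : σ n ≠ σ (Fin.castLE (Nat.succ_le_succ hkl)
            (⟨(n':ℕ), Nat.lt_succ_of_le hn'l⟩ : Fin (l+1))) := by
          rw [hcast n' hn'l]; exact hσinj.ne hnn'
        have h1 := hball _ _ _ (hcross (σ n) _ hne) x hx y hy
        linarith
      · have hne : σ n' ≠ σ (Fin.castLE (Nat.succ_le_succ hkl)
            (⟨(n:ℕ), Nat.lt_succ_of_le hnl⟩ : Fin (l+1))) := by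
          rw [hcast n hnl]; exact hσinj.ne (Ne.symm hnn')
        have h1 := hball _ _ _ (hcross (σ n') _ hne) y hy x hx
        rw [dist_comm] at h1
        linarith
      · have hjj : (⟨(n:ℕ), Nat.lt_succ_of_le hnl⟩ : Fin (l+1)) ≠
            ⟨(n':ℕ), Nat.lt_succ_of_le hn'l⟩ := by
          intro h
          rw [Fin.mk.injEq] at h
          exact hnn' (Fin.ext h)
        have h1 := hball _ _ _ (hsepT₂ _ _ hjj) x hx y hy
        linarith
    · intro n
      calc ENNReal.ofReal (min (θ / T.card) c)
          ≤ ENNReal.ofReal c := ENNReal.ofReal_le_ofReal (min_le_right _ _)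
        _ ≤ μ (Metric.ball (t₁ (σ n)) (δ/16)) := hcb _
        _ ≤ μ (Ω n) := measure_mono Set.subset_union_left
    · intro n
      have hsub : Ω₁ (σ n) ∩ Metric.ball (t₁ (σ n)) (δ/16) ⊆ Ω n :=
        fun x hx => Set.mem_union_left _ hx.2
      calc min (θ / T.card) c ≤ θ / T.card := min_le_left _ _
        _ ≤ ∫ x in Ω₁ (σ n) ∩ Metric.ball (t₁ (σ n)) (δ/16), f₁ x ∂μ := ht₁ (σ n)
        _ ≤ ∫ x in Ω n, f₁ x ∂μ := my_setIntegral_mono_set' hf₁ hif₁ hsub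
    · intro n hnl
      have hsub : Ω₂ ⟨(n:ℕ), Nat.lt_succ_of_le hnl⟩ ∩
          Metric.ball (t₂ ⟨(n:ℕ), Nat.lt_succ_of_le hnl⟩) (δ/16) ⊆ Ω n := by
        intro x hx
        exact Set.mem_union_right _ (Set.mem_iUnion.2 ⟨hnl, hx.2⟩)
      calc min (θ / T.card) c ≤ θ / T.card := min_le_left _ _
        _ ≤ ∫ x in Ω₂ ⟨(n:ℕ), Nat.lt_succ_of_le hnl⟩ ∩
              Metric.ball (t₂ ⟨(n:ℕ), Nat.lt_succ_of_le hnl⟩) (δ/16), f₂ x ∂μ :=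
            ht₂ _
        _ ≤ ∫ x in Ω n, f₂ x ∂μ := my_setIntegral_mono_set' hf₂ hif₂ hsub
end

section
/- Let (Σ,d) be a compact metric space, μ a finite Borel measure on Σ, m ∈ ℕ, ε > 0 and s > 0. Then there exist ε̄ > 0 and s̄ > 0, depending only on (Σ,d,μ), m, ε and s (not on f), with the following property: for every μ-integrable f : Σ → [0,∞) with ∫_Σ f dμ = 1 such that ∫_{⋃_{j=1}^m B_s(x_j)} f dμ < 1 − ε for every choice of points x₁,…,x_m ∈ Σ, there exist points x̄₀, x̄₁, …, x̄_m ∈ Σ satisfying ∫_{B_{s̄}(x̄_j)} f dμ > ε̄ for every j ∈ {0,…,m} and B_{2s̄}(x̄_i) ∩ B_{2s̄}(x̄_j) = ∅ for all i ≠ j. -/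
open MeasureTheory Metric Set

lemma aux_setIntegral_le_sum {S : Type*} [MeasurableSpace S] (μ : Measure S)
    (f : S → ℝ) (hf0 : ∀ x, 0 ≤ f x) (hint : Integrable f μ)
    {ι : Type*} (t : Finset ι) (B : ι → Set S) (A : Set S)
    (hA : A ⊆ ⋃ c ∈ t, B c) :
    ∫ y in A, f y ∂μ ≤ ∑ c ∈ t, ∫ y in B c ∩ A, f y ∂μ := by
  have key : ∀ u : Set S, ∫ y in u, f y ∂μ
      = (∫⁻ y in u, ENNReal.ofReal (f y) ∂μ).toReal := by
    intro u
    rw [integral_eq_lintegral_of_nonneg_ae (Filter.Eventually.of_forall hf0)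
      hint.1.restrict]
  have hfin : ∀ u : Set S, (∫⁻ y in u, ENNReal.ofReal (f y) ∂μ) ≠ ⊤ := by
    intro u
    exact (hint.integrableOn (s := u)).setLIntegral_lt_top.ne
  have hsub : A ⊆ ⋃ c : t, (B c ∩ A) := by
    intro y hy
    obtain ⟨c, hc, hyc⟩ := Set.mem_iUnion₂.1 (hA hy)
    exact Set.mem_iUnion.2 ⟨⟨c, hc⟩, hyc, hy⟩
  have h1 : (∫⁻ y in A, ENNReal.ofReal (f y) ∂μ)
      ≤ ∑ c ∈ t, ∫⁻ y in B c ∩ A, ENNReal.ofReal (f y) ∂μ := by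
    calc (∫⁻ y in A, ENNReal.ofReal (f y) ∂μ)
        ≤ ∫⁻ y in ⋃ c : t, (B c ∩ A), ENNReal.ofReal (f y) ∂μ :=
          lintegral_mono_set hsub
      _ ≤ ∑' c : t, ∫⁻ y in B (c : ι) ∩ A, ENNReal.ofReal (f y) ∂μ :=
          lintegral_iUnion_le _ _
      _ = ∑ c ∈ t, ∫⁻ y in B c ∩ A, ENNReal.ofReal (f y) ∂μ :=
          t.tsum_subtype (fun c => ∫⁻ y in B c ∩ A, ENNReal.ofReal (f y) ∂μ)
  rw [key]
  calc (∫⁻ y in A, ENNReal.ofReal (f y) ∂μ).toReal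
      ≤ (∑ c ∈ t, ∫⁻ y in B c ∩ A, ENNReal.ofReal (f y) ∂μ).toReal := by
        refine ENNReal.toReal_mono ?_ h1
        exact (ENNReal.sum_lt_top.2 fun c _ => (hfin _).lt_top).ne
    _ = ∑ c ∈ t, (∫⁻ y in B c ∩ A, ENNReal.ofReal (f y) ∂μ).toReal :=
        ENNReal.toReal_sum fun c _ => hfin _
    _ = ∑ c ∈ t, ∫ y in B c ∩ A, f y ∂μ := by
        refine Finset.sum_congr rfl fun c _ => ?_
        rw [key]

/-- on a compact metric space with a finite Borel measure, if a normalized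
nonnegative density `f` leaves mass at least `ε` outside every union of `m` balls of radius
`s`, then there are `m+1` points carrying mass more than `ε̄` in balls of radius `s̄` with
disjoint doubled balls; `ε̄, s̄ > 0` depend only on the space, the measure, `m`, `ε`, `s`. -/
theorem exists_separated_mass_points (S : Type*) [MetricSpace S] [CompactSpace S]
    [MeasurableSpace S] [BorelSpace S] (μ : Measure S) [IsFiniteMeasure μ]
    (m : ℕ) (ε s : ℝ) (hε : 0 < ε) (hs : 0 < s) :
    ∃ εb sb : ℝ, 0 < εb ∧ 0 < sb ∧
      ∀ f : S → ℝ, (∀ x, 0 ≤ f x) → Integrable f μ → (∫ x, f x ∂μ) = 1 →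
        (∀ x : Fin m → S, (∫ y in ⋃ j, Metric.ball (x j) s, f y ∂μ) < 1 - ε) →
        ∃ xb : Fin (m + 1) → S,
          (∀ j, εb < ∫ y in Metric.ball (xb j) sb, f y ∂μ) ∧
          (∀ i j, i ≠ j →
            Disjoint (Metric.ball (xb i) (2 * sb)) (Metric.ball (xb j) (2 * sb))) := by
  -- finite cover of the space by balls of radius `s/5`
  obtain ⟨t, ht⟩ : ∃ t : Finset S, (Set.univ : Set S) ⊆ ⋃ c ∈ t, ball c (s / 5) := by
    refine isCompact_univ.elim_finite_subcover (fun c : S => ball c (s / 5))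
      (fun _ => isOpen_ball) ?_
    intro y _
    exact Set.mem_iUnion.2 ⟨y, mem_ball_self (by linarith)⟩
  set N : ℝ := (t.card : ℝ) with hN
  have hNnonneg : (0 : ℝ) ≤ N := Nat.cast_nonneg _
  have hεb : 0 < ε / (N + 1) := div_pos hε (by linarith)
  refine ⟨ε / (N + 1), s / 5, hεb, by linarith, ?_⟩
  intro f hf0 hint hint1 hf
  haveI : Nonempty S := by
    rcases isEmpty_or_nonempty S with h | h
    · rw [Measure.eq_zero_of_isEmpty μ] at hint1
      simp at hint1
    · exact h
  -- inductive construction of separated points with mass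
  have key : ∀ k : ℕ, k ≤ m + 1 → ∃ g : Fin k → S,
      (∀ j, ε / (N + 1) < ∫ y in ball (g j) (s / 5), f y ∂μ) ∧
      (∀ i j, i ≠ j → 4 * (s / 5) ≤ dist (g i) (g j)) := by
    intro k
    induction k with
    | zero => exact fun _ => ⟨Fin.elim0, fun j => j.elim0, fun i => i.elim0⟩
    | succ k ih =>
      intro hk
      have hkm : k ≤ m := Nat.succ_le_succ_iff.mp hk
      obtain ⟨g, hg1, hg2⟩ := ih (le_trans (Nat.le_succ k) hk)
      set x : Fin m → S :=
        fun j => if h : (j : ℕ) < k then g ⟨j, h⟩ else Classical.arbitrary S with hxdef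
      set U : Set S := ⋃ j, ball (x j) s with hU
      have hUmeas : MeasurableSet U :=
        (isOpen_iUnion fun _ => isOpen_ball).measurableSet
      have hmass : ε < ∫ y in Uᶜ, f y ∂μ := by
        have h1 := hf x
        have h2 : (∫ y in U, f y ∂μ) + ∫ y in Uᶜ, f y ∂μ = 1 := by
          rw [integral_add_compl hUmeas hint, hint1]
        linarith
      have hle := aux_setIntegral_le_sum μ f hf0 hint t (fun c => ball c (s / 5)) Uᶜ
        (le_trans (Set.subset_univ _) ht)
      have hpigeon : ∃ c ∈ t, ε / (N + 1) < ∫ y in ball c (s / 5) ∩ Uᶜ, f y ∂μ := by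
        by_contra h
        push_neg at h
        have hsum : ∑ c ∈ t, ∫ y in ball c (s / 5) ∩ Uᶜ, f y ∂μ
            ≤ ∑ _c ∈ t, ε / (N + 1) := Finset.sum_le_sum fun c hc => h c hc
        rw [Finset.sum_const, nsmul_eq_mul] at hsum
        have hlt : N * (ε / (N + 1)) < ε := by
          rw [mul_div_assoc'] at *
          rw [div_lt_iff₀ (by linarith : (0:ℝ) < N + 1)]
          nlinarith
        linarith
      obtain ⟨c, hct, hcmass⟩ := hpigeon
      have hAne : (ball c (s / 5) ∩ Uᶜ).Nonempty := by
        by_contra h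
        rw [Set.not_nonempty_iff_eq_empty] at h
        rw [h, setIntegral_empty] at hcmass
        linarith
      obtain ⟨y, hy_ball, hy_comp⟩ := hAne
      have hball_mass : ε / (N + 1) < ∫ z in ball c (s / 5), f z ∂μ :=
        lt_of_lt_of_le hcmass (setIntegral_mono_set hint.integrableOn
          (Filter.Eventually.of_forall hf0)
          (HasSubset.Subset.eventuallyLE Set.inter_subset_left))
      have hsep : ∀ j : Fin k, 4 * (s / 5) ≤ dist c (g j) := by
        intro j
        have hjm : (j : ℕ) < m := lt_of_lt_of_le j.2 hkm
        have hx : x ⟨(j : ℕ), hjm⟩ = g j := by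
          simp only [hxdef]
          rw [dif_pos j.2]
        have hyU : y ∉ ball (g j) s := by
          intro hmem
          exact hy_comp (Set.mem_iUnion.2 ⟨⟨(j : ℕ), hjm⟩, by rwa [hx]⟩)
        have h1 : s ≤ dist y (g j) := not_lt.1 (by simpa [mem_ball] using hyU)
        have h2 : dist y c < s / 5 := mem_ball.1 hy_ball
        have h3 := dist_triangle y c (g j)
        linarith
      refine ⟨Fin.cons c g, ?_, ?_⟩
      · intro j
        induction j using Fin.cases with
        | zero => simpa using hball_mass
        | succ i => simpa using hg1 i
      · intro i j hij
        induction i using Fin.cases with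
        | zero =>
          induction j using Fin.cases with
          | zero => exact absurd rfl hij
          | succ j' => simpa using hsep j'
        | succ i' =>
          induction j using Fin.cases with
          | zero => simpa [dist_comm] using hsep i'
          | succ j' =>
            have : i' ≠ j' := fun h => hij (by rw [h])
            simpa using hg2 i' j' this
  obtain ⟨g, hg1, hg2⟩ := key (m + 1) le_rfl
  refine ⟨g, hg1, fun i j hij => ?_⟩
  exact ball_disjoint_ball (by linarith [hg2 i j hij])
end

section
/- Let k ∈ ℕ, let x₁,…,x_k ∈ ℝ², let t₁,…,t_k ≥ 0 with ∑_{i=1}^k t_i = 1, let λ ≥ 0, and define v : ℝ² → ℝ by v(x) = log( ∑_{i=1}^k t_i (1 + λ² ‖x − x_i‖²)^{−2} ). Then v is differentiable on ℝ² and ‖∇v(x)‖ ≤ 2λ for every x ∈ ℝ². -/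
/-!
Write `fᵢ(x) = (1 + λ²‖x − xᵢ‖²)⁻²`. With `r = ‖x − xᵢ‖`, the gradient of `1 + λ²r²` has norm
`2λ²r ≤ λ(1 + λ²r²)` by AM–GM, and hence `‖∇fᵢ‖ ≤ 2λ fᵢ`. A bound of the form `‖∇f‖ ≤ C f`
carries over to nonnegative combinations `S = ∑ tᵢ fᵢ`, and `∇(log S) = ∇S / S` then has
norm at most `C = 2λ`.
-/

/-- The function `v(x) = log ( ∑ᵢ tᵢ (1 + λ² ‖x − xᵢ‖²)⁻² )` on `ℝ²`. -/
noncomputable def todaTestFun (k : ℕ) (t : Fin k → ℝ)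
    (p : Fin k → EuclideanSpace ℝ (Fin 2)) (lam : ℝ)
    (x : EuclideanSpace ℝ (Fin 2)) : ℝ :=
  Real.log (∑ i, t i * ((1 + lam ^ 2 * ‖x - p i‖ ^ 2) ^ 2)⁻¹)

open Finset Real

theorem Finset.sum_mul_pos_of_sum_pos {ι : Type*} {s : Finset ι} {t f : ι → ℝ}
    (ht : ∀ i ∈ s, 0 ≤ t i) (hts : 0 < ∑ i ∈ s, t i) (hf : ∀ i ∈ s, 0 < f i) :
    0 < ∑ i ∈ s, t i * f i := by
  obtain ⟨i, hi, hti⟩ := exists_lt_of_sum_lt (by simpa using hts : ∑ i ∈ s, (0 : ℝ) < _)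
  exact sum_pos' (fun j hj => mul_nonneg (ht j hj) (hf j hj).le)
    ⟨i, hi, mul_pos hti (hf i hi)⟩

section NormedSpace

variable {E : Type*} [NormedAddCommGroup E] [NormedSpace ℝ E] {x : E} {C : ℝ}

theorem norm_fderiv_inv_sq_le {g : E → ℝ} (hg : DifferentiableAt ℝ g x) (hgx : 0 < g x)
    (hC : ‖fderiv ℝ g x‖ ≤ C * g x) :
    ‖fderiv ℝ (fun y => (g y ^ 2)⁻¹) x‖ ≤ 2 * C * (g x ^ 2)⁻¹ := by
  have hderiv : HasFDerivAt (fun y => (g y ^ 2)⁻¹) ((-(2 / g x ^ 3)) • fderiv ℝ g x) x := by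
    refine (((hasDerivAt_pow 2 (g x)).inv (by positivity)).comp_hasFDerivAt x
      hg.hasFDerivAt).congr_fderiv ?_
    congr 1
    field_simp
    ring
  rw [hderiv.fderiv, norm_smul, norm_neg, Real.norm_of_nonneg (by positivity)]
  calc 2 / g x ^ 3 * ‖fderiv ℝ g x‖
      ≤ 2 / g x ^ 3 * (C * g x) := by gcongr
    _ = 2 * C * (g x ^ 2)⁻¹ := by field_simp

theorem norm_fderiv_log_sum_le {ι : Type*} {s : Finset ι} {t : ι → ℝ} {f : ι → E → ℝ}
    (ht : ∀ i ∈ s, 0 ≤ t i) (hf : ∀ i ∈ s, DifferentiableAt ℝ (f i) x)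
    (hC : ∀ i ∈ s, ‖fderiv ℝ (f i) x‖ ≤ C * f i x) (hpos : 0 < ∑ i ∈ s, t i * f i x) :
    ‖fderiv ℝ (fun y => log (∑ i ∈ s, t i * f i y)) x‖ ≤ C := by
  have hsum : HasFDerivAt (fun y => ∑ i ∈ s, t i * f i y) (∑ i ∈ s, t i • fderiv ℝ (f i) x) x :=
    HasFDerivAt.fun_sum fun i hi => (hf i hi).hasFDerivAt.const_mul (t i)
  rw [(hsum.log hpos.ne').fderiv, norm_smul, Real.norm_of_nonneg (inv_nonneg.2 hpos.le),
    inv_mul_le_iff₀ hpos]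
  calc ‖∑ i ∈ s, t i • fderiv ℝ (f i) x‖
      ≤ ∑ i ∈ s, t i * ‖fderiv ℝ (f i) x‖ := by
        refine (norm_sum_le _ _).trans_eq (sum_congr rfl fun i hi => ?_)
        rw [norm_smul, Real.norm_of_nonneg (ht i hi)]
    _ ≤ ∑ i ∈ s, t i * (C * f i x) :=
        sum_le_sum fun i hi => mul_le_mul_of_nonneg_left (hC i hi) (ht i hi)
    _ = (∑ i ∈ s, t i * f i x) * C := by rw [sum_mul]; exact sum_congr rfl fun i _ => by ring

end NormedSpace

section InnerProductSpace

variable {E : Type*} [NormedAddCommGroup E] [InnerProductSpace ℝ E] (lam : ℝ) (q x : E)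

theorem hasFDerivAt_one_add_mul_norm_sub_sq :
    HasFDerivAt (fun y => 1 + lam ^ 2 * ‖y - q‖ ^ 2) ((2 * lam ^ 2) • innerSL ℝ (x - q)) x := by
  refine ((((hasFDerivAt_id x).sub_const q).norm_sq.const_mul (lam ^ 2)).const_add 1).congr_fderiv
    ?_
  rw [ContinuousLinearMap.comp_id, id]
  module

theorem differentiable_inv_sq_one_add_mul_norm_sub_sq :
    Differentiable ℝ (fun y => ((1 + lam ^ 2 * ‖y - q‖ ^ 2) ^ 2)⁻¹) := fun x =>
  ((hasFDerivAt_one_add_mul_norm_sub_sq lam q x).differentiableAt.fun_pow 2).inv (by positivity)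

theorem norm_fderiv_one_add_mul_norm_sub_sq_le :
    ‖fderiv ℝ (fun y => 1 + lam ^ 2 * ‖y - q‖ ^ 2) x‖ ≤ |lam| * (1 + lam ^ 2 * ‖x - q‖ ^ 2) := by
  rw [(hasFDerivAt_one_add_mul_norm_sub_sq lam q x).fderiv, norm_smul, innerSL_apply_norm,
    Real.norm_of_nonneg (by positivity : (0 : ℝ) ≤ 2 * lam ^ 2), ← sq_abs lam]
  nlinarith [sq_nonneg (1 - |lam| * ‖x - q‖), abs_nonneg lam]

theorem norm_fderiv_inv_sq_one_add_mul_norm_sub_sq_le :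
    ‖fderiv ℝ (fun y => ((1 + lam ^ 2 * ‖y - q‖ ^ 2) ^ 2)⁻¹) x‖ ≤
      2 * |lam| * ((1 + lam ^ 2 * ‖x - q‖ ^ 2) ^ 2)⁻¹ :=
  norm_fderiv_inv_sq_le (hasFDerivAt_one_add_mul_norm_sub_sq lam q x).differentiableAt
    (by positivity) (norm_fderiv_one_add_mul_norm_sub_sq_le lam q x)

end InnerProductSpace

/-- the gradient of `v` is bounded in norm by `2λ`. -/
theorem gradient_bound_of_todaTestFun (k : ℕ) (t : Fin k → ℝ)
    (p : Fin k → EuclideanSpace ℝ (Fin 2))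
    (ht : ∀ i, 0 ≤ t i) (htsum : ∑ i, t i = 1)
    (lam : ℝ) (hlam : 0 ≤ lam) :
    (∀ x, DifferentiableAt ℝ (todaTestFun k t p lam) x) ∧
      (∀ x, ‖gradient (todaTestFun k t p lam) x‖ ≤ 2 * lam) := by
  have hdiff i := differentiable_inv_sq_one_add_mul_norm_sub_sq lam (p i)
  have hpos : ∀ x, 0 < ∑ i, t i * ((1 + lam ^ 2 * ‖x - p i‖ ^ 2) ^ 2)⁻¹ := fun x =>
    sum_mul_pos_of_sum_pos (fun i _ => ht i) (by simp [htsum]) fun i _ => by positivity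
  refine ⟨fun x => ?_, fun x => ?_⟩
  · exact (DifferentiableAt.fun_sum fun i _ => (hdiff i x).const_mul (t i)).log (hpos x).ne'
  · rw [gradient, LinearIsometryEquiv.norm_map]
    have hbound := norm_fderiv_log_sum_le (fun i _ => ht i) (fun i _ => hdiff i x)
      (fun i _ => norm_fderiv_inv_sq_one_add_mul_norm_sub_sq_le lam (p i) x) (hpos x)
    rwa [abs_of_nonneg hlam] at hbound
end

section
/- Let k ∈ ℕ, let x₁,…,x_k ∈ ℝ², let t₁,…,t_k ≥ 0 with ∑_{i=1}^k t_i = 1, let λ ≥ 0, and define v : ℝ² → ℝ by v(x) = log( ∑_{i=1}^k t_i (1 + λ² ‖x − x_i‖²)^{−2} ). Then for every x ∈ ℝ² with x ∉ {x₁,…,x_k} one has ‖∇v(x)‖ ≤ 4 / d_min(x), where d_min(x) = min_{i=1,…,k} ‖x − x_i‖. -/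
open Metric

theorem four_mul_div_one_add_mul_sq_pow_three_mul_le {c r : ℝ} (hc : 0 ≤ c) (hr : 0 ≤ r) :
    4 * c / (1 + c * r ^ 2) ^ 3 * r ≤ 4 / r * ((1 + c * r ^ 2) ^ 2)⁻¹ := by
  rcases hr.eq_or_lt with rfl | hr
  · simp
  have hA : 0 < 1 + c * r ^ 2 := by positivity
  calc 4 * c / (1 + c * r ^ 2) ^ 3 * r
      = 4 / r * ((1 + c * r ^ 2) ^ 2)⁻¹ * (c * r ^ 2 / (1 + c * r ^ 2)) := by
        field_simp
    _ ≤ 4 / r * ((1 + c * r ^ 2) ^ 2)⁻¹ * 1 := by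
        gcongr
        exact (div_le_one hA).mpr (by linarith)
    _ = 4 / r * ((1 + c * r ^ 2) ^ 2)⁻¹ := mul_one _

section NormedSpace

variable {E : Type*} [NormedAddCommGroup E] [NormedSpace ℝ E]

theorem norm_fderiv_log_le_of_norm_le_mul {f : E → ℝ} {f' : StrongDual ℝ E} {x : E} {C : ℝ}
    (hf : HasFDerivAt f f' x) (hpos : 0 < f x) (hf' : ‖f'‖ ≤ C * f x) :
    ‖fderiv ℝ (fun y => Real.log (f y)) x‖ ≤ C := by
  rw [(hf.log hpos.ne').fderiv, norm_smul, norm_inv, Real.norm_of_nonneg hpos.le,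
    inv_mul_le_iff₀ hpos, mul_comm]
  exact hf'

end NormedSpace

section InnerProductSpace

variable {E : Type*} [NormedAddCommGroup E] [InnerProductSpace ℝ E]

theorem hasFDerivAt_inv_sq_one_add_mul_norm_sub_sq {c : ℝ} (hc : 0 ≤ c) (a x : E) :
    HasFDerivAt (fun y => ((1 + c * ‖y - a‖ ^ 2) ^ 2)⁻¹)
      ((-(4 * c) / (1 + c * ‖x - a‖ ^ 2) ^ 3) • innerSL ℝ (x - a)) x := by
  have hA : 1 + c * ‖x - a‖ ^ 2 ≠ 0 := by positivity
  have hnormsq : HasFDerivAt (fun y : E => ‖y - a‖ ^ 2) (2 • innerSL ℝ (x - a)) x := by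
    simpa using ((hasFDerivAt_id x).sub_const a).norm_sq
  have hA2 : HasFDerivAt (fun y : E => (1 + c * ‖y - a‖ ^ 2) ^ 2) _ x :=
    ((hnormsq.const_mul c).const_add 1).pow 2
  refine ((hasDerivAt_inv (pow_ne_zero 2 hA)).comp_hasFDerivAt x hA2).congr_fderiv ?_
  simp only [smul_smul, ← Nat.cast_smul_eq_nsmul ℝ, smul_eq_mul]
  congr 1
  field_simp
  ring

theorem norm_fderiv_log_sum_inv_sq_one_add_mul_norm_sub_sq_le {ι : Type*} [Fintype ι]
    {t : ι → ℝ} (ht : ∀ i, 0 ≤ t i) (ht_pos : ∃ i, 0 < t i) {c : ℝ} (hc : 0 ≤ c)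
    {p : ι → E} {x : E} {d : ℝ} (hd : 0 < d) (hdist : ∀ i, d ≤ ‖x - p i‖) :
    ‖fderiv ℝ (fun y => Real.log (∑ i, t i * ((1 + c * ‖y - p i‖ ^ 2) ^ 2)⁻¹)) x‖ ≤ 4 / d := by
  have hS := HasFDerivAt.fun_sum (u := Finset.univ) fun i _ =>
    (hasFDerivAt_inv_sq_one_add_mul_norm_sub_sq hc (p i) x).const_mul (t i)
  obtain ⟨j, hj⟩ := ht_pos
  have hpos : 0 < ∑ i, t i * ((1 + c * ‖x - p i‖ ^ 2) ^ 2)⁻¹ :=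
    Finset.sum_pos' (fun i _ => by have := ht i; positivity)
      ⟨j, Finset.mem_univ j, by positivity⟩
  refine norm_fderiv_log_le_of_norm_le_mul hS hpos ?_
  rw [Finset.mul_sum]
  refine (norm_sum_le _ _).trans (Finset.sum_le_sum fun i _ => ?_)
  have hr := hdist i
  have hA : 0 < 1 + c * ‖x - p i‖ ^ 2 := by positivity
  rw [norm_smul, norm_smul, innerSL_apply_norm, Real.norm_of_nonneg (ht i), norm_div, norm_neg,
    Real.norm_of_nonneg (by positivity : 0 ≤ 4 * c), Real.norm_of_nonneg (pow_pos hA 3).le]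
  have hti := ht i
  calc t i * (4 * c / (1 + c * ‖x - p i‖ ^ 2) ^ 3 * ‖x - p i‖)
      ≤ t i * (4 / ‖x - p i‖ * ((1 + c * ‖x - p i‖ ^ 2) ^ 2)⁻¹) :=
        mul_le_mul_of_nonneg_left
          (four_mul_div_one_add_mul_sq_pow_three_mul_le hc (norm_nonneg _)) hti
    _ ≤ t i * (4 / d * ((1 + c * ‖x - p i‖ ^ 2) ^ 2)⁻¹) := by gcongr
    _ = 4 / d * (t i * ((1 + c * ‖x - p i‖ ^ 2) ^ 2)⁻¹) := mul_left_comm _ _ _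

end InnerProductSpace

theorem gradient_bound_of_todaTestFun_away_general (k : ℕ) (t : Fin k → ℝ)
    (p : Fin k → EuclideanSpace ℝ (Fin 2))
    (ht : ∀ i, 0 ≤ t i) (htsum : ∑ i, t i = 1)
    (lam : ℝ)
    (x : EuclideanSpace ℝ (Fin 2)) (hx : x ∉ Set.range p) :
    ‖gradient (todaTestFun k t p lam) x‖ ≤ 4 / Metric.infDist x (Set.range p) := by
  obtain ⟨i, -, hi⟩ : ∃ i ∈ Finset.univ, (0 : ℝ) < t i :=
    Finset.exists_lt_of_sum_lt (by simp [htsum] : ∑ _ : Fin k, (0 : ℝ) < ∑ i, t i)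
  have hd : 0 < infDist x (Set.range p) :=
    ((Set.finite_range p).isClosed.notMem_iff_infDist_pos ⟨p i, i, rfl⟩).mp hx
  have hdist (j : Fin k) : infDist x (Set.range p) ≤ ‖x - p j‖ :=
    dist_eq_norm x (p j) ▸ infDist_le_dist_of_mem ⟨j, rfl⟩
  rw [← (InnerProductSpace.toDual ℝ _).norm_map, toDual_gradient]
  exact norm_fderiv_log_sum_inv_sq_one_add_mul_norm_sub_sq_le ht ⟨i, hi⟩ (sq_nonneg lam) hd hdist

/-- away from the points `xᵢ`, the gradient of `v` is bounded in norm by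
`4 / d_min(x)`, where `d_min(x) = minᵢ ‖x − xᵢ‖`. -/
theorem gradient_bound_of_todaTestFun_away (k : ℕ) (t : Fin k → ℝ)
    (p : Fin k → EuclideanSpace ℝ (Fin 2))
    (ht : ∀ i, 0 ≤ t i) (htsum : ∑ i, t i = 1)
    (lam : ℝ) (hlam : 0 ≤ lam)
    (x : EuclideanSpace ℝ (Fin 2)) (hx : x ∉ Set.range p) :
    ‖gradient (todaTestFun k t p lam) x‖ ≤ 4 / Metric.infDist x (Set.range p) :=
  gradient_bound_of_todaTestFun_away_general k t p ht htsum lam x hx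
end

section
/- Let k ∈ ℕ and R > 0. There exists a constant C > 0, depending only on k and R, such that for every choice of points x₁,…,x_k ∈ ℝ², every measurable set Ω ⊆ ℝ² contained in the ball B_R(0), and every λ ≥ 1, one has ∫_{Ω \ ⋃_{i=1}^k B_{1/λ}(x_i)} dist(x, {x₁,…,x_k})^{−2} dx ≤ 2πk log λ + C, where dist(x, {x₁,…,x_k}) = min_{i=1,…,k} ‖x − x_i‖. -/
open MeasureTheory Metric Set

/-!
The minimum distance to finitely many points is attained, so
`dist(x, {xᵢ})⁻² ≤ ∑ᵢ ‖x - xᵢ‖⁻²` and it suffices to treat a single point `p`. In the plane,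
polar coordinates give `∫_{r ≤ ‖x - p‖ < ρ} ‖x - p‖⁻² dx = 2π log (ρ / r)`; with `r = 1/λ` and
`ρ = R + 1`, the part of `Ω` where `‖x - p‖ ≥ ρ` contributes at most `|Ω| / ρ² ≤ π`.
-/

section MetricSpace

variable {α : Type*} [PseudoMetricSpace α]

lemma inv_sq_infDist_range_le_sum {ι : Type*} [Fintype ι] (x : α) (X : ι → α) :
    (infDist x (range X) ^ 2)⁻¹ ≤ ∑ i, (dist x (X i) ^ 2)⁻¹ := by
  rcases isEmpty_or_nonempty ι with _ | _
  · simp [range_eq_empty X]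
  obtain ⟨_, ⟨i, rfl⟩, hi⟩ :=
    (finite_range X).isCompact.exists_infDist_eq_dist (range_nonempty X) x
  rw [hi]
  exact Finset.single_le_sum (f := fun i => (dist x (X i) ^ 2)⁻¹) (fun _ _ => by positivity)
    (Finset.mem_univ i)

variable [MeasurableSpace α] [OpensMeasurableSpace α] {μ : Measure α} {S : Set α} {r : ℝ}

lemma integrableOn_inv_dist_sq_diff_ball (hS : MeasurableSet S) (hμS : μ S ≠ ⊤) (hr : 0 < r)
    (p : α) : IntegrableOn (fun x => (dist x p ^ 2)⁻¹) (S \ ball p r) μ := by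
  refine Measure.integrableOn_of_bounded (M := (r ^ 2)⁻¹)
    (measure_ne_top_of_subset sdiff_subset hμS) ?_ ?_
  · exact (continuous_id.dist continuous_const).pow 2 |>.measurable.inv.aestronglyMeasurable
  · refine ae_restrict_of_forall_mem (hS.diff measurableSet_ball) fun x hx => ?_
    have hrx : r ≤ dist x p := not_lt.1 hx.2
    rw [Real.norm_of_nonneg (by positivity)]
    gcongr

lemma setIntegral_inv_sq_infDist_le_sum {ι : Type*} [Fintype ι] (hS : MeasurableSet S)
    (hμS : μ S ≠ ⊤) (hr : 0 < r) (X : ι → α) :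
    ∫ x in S \ ⋃ i, ball (X i) r, (infDist x (range X) ^ 2)⁻¹ ∂μ ≤
      ∑ i, ∫ x in S \ ball (X i) r, (dist x (X i) ^ 2)⁻¹ ∂μ := by
  have hsub : ∀ i, S \ ⋃ j, ball (X j) r ⊆ S \ ball (X i) r := fun i =>
    sdiff_subset_sdiff_right (subset_iUnion (fun j => ball (X j) r) i)
  have hint : ∀ i, IntegrableOn (fun x => (dist x (X i) ^ 2)⁻¹) (S \ ball (X i) r) μ :=
    fun i => integrableOn_inv_dist_sq_diff_ball hS hμS hr (X i)
  calc ∫ x in S \ ⋃ i, ball (X i) r, (infDist x (range X) ^ 2)⁻¹ ∂μ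
      ≤ ∫ x in S \ ⋃ i, ball (X i) r, ∑ i, (dist x (X i) ^ 2)⁻¹ ∂μ :=
        integral_mono_of_nonneg (ae_of_all _ fun _ => by positivity)
          (integrable_finsetSum _ fun i _ => (hint i).mono_set (hsub i))
          (ae_of_all _ fun x => inv_sq_infDist_range_le_sum x X)
    _ = ∑ i, ∫ x in S \ ⋃ i, ball (X i) r, (dist x (X i) ^ 2)⁻¹ ∂μ :=
        integral_finsetSum _ fun i _ => (hint i).mono_set (hsub i)
    _ ≤ ∑ i, ∫ x in S \ ball (X i) r, (dist x (X i) ^ 2)⁻¹ ∂μ :=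
        Finset.sum_le_sum fun i _ => setIntegral_mono_set (hint i)
          (ae_of_all _ fun _ => by positivity) (hsub i).eventuallyLE

end MetricSpace

section Plane

variable {E : Type*} [NormedAddCommGroup E] [NormedSpace ℝ E] [FiniteDimensional ℝ E]
  [MeasurableSpace E] [BorelSpace E] (μ : Measure E) [μ.IsAddHaarMeasure]

lemma setIntegral_ball_diff_ball_inv_dist_sq (hE : Module.finrank ℝ E = 2) (p : E) {a b : ℝ}
    (ha : 0 < a) (hab : a ≤ b) :
    ∫ x in ball p b \ ball p a, (dist x p ^ 2)⁻¹ ∂μ = 2 * μ.real (ball 0 1) * Real.log (b / a) := by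
  have : Nontrivial E := Module.nontrivial_of_finrank_eq_succ hE
  have hannulus : ball p b \ ball p a = (fun x => ‖x - p‖) ⁻¹' Ico a b := by
    ext x
    simp [dist_eq_norm, and_comm]
  have hIco : Ioi 0 ∩ Ico a b = Ico a b := inter_eq_right.2 fun y hy => ha.trans_le hy.1
  have hradial : ∀ y : ℝ, y ^ (2 - 1) • (Ico a b).indicator (fun t => (t ^ 2)⁻¹) y =
      (Ico a b).indicator (fun t => t⁻¹) y := by
    intro y
    by_cases hy : y ∈ Ico a b
    · have : y ≠ 0 := (ha.trans_le hy.1).ne'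
      simp only [indicator_of_mem hy, smul_eq_mul]
      field_simp
      norm_num
    · simp [indicator_of_notMem hy]
  calc ∫ x in ball p b \ ball p a, (dist x p ^ 2)⁻¹ ∂μ
      = ∫ x, (Ico a b).indicator (fun t => (t ^ 2)⁻¹) ‖x - p‖ ∂μ := by
        rw [← integral_indicator (measurableSet_ball.diff measurableSet_ball), hannulus]
        simp_rw [dist_eq_norm]
        rfl
    _ = ∫ x, (Ico a b).indicator (fun t => (t ^ 2)⁻¹) ‖x‖ ∂μ :=
        integral_sub_right_eq_self (fun x => (Ico a b).indicator (fun t => (t ^ 2)⁻¹) ‖x‖) p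
    _ = 2 * μ.real (ball 0 1) * ∫ y in Ico a b, y⁻¹ := by
        rw [integral_fun_norm_addHaar, hE]
        simp only [hradial, setIntegral_indicator measurableSet_Ico, hIco, nsmul_eq_mul,
          smul_eq_mul, Nat.cast_ofNat, mul_assoc]
    _ = 2 * μ.real (ball 0 1) * Real.log (b / a) := by
        rw [integral_Ico_eq_integral_Ioc, ← intervalIntegral.integral_of_le hab,
          integral_inv_of_pos ha (ha.trans_le hab)]

lemma setIntegral_diff_ball_inv_dist_sq_le (hE : Module.finrank ℝ E = 2) (p : E) {S : Set E}
    (hS : MeasurableSet S) (hμS : μ S ≠ ⊤) {r ρ : ℝ} (hr : 0 < r) (hrρ : r ≤ ρ) :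
    ∫ x in S \ ball p r, (dist x p ^ 2)⁻¹ ∂μ ≤
      2 * μ.real (ball 0 1) * Real.log (ρ / r) + μ.real S / ρ ^ 2 := by
  rw [← integral_inter_add_sdiff measurableSet_ball
    (integrableOn_inv_dist_sq_diff_ball hS hμS hr p)]
  gcongr ?_ + ?_
  · calc ∫ x in (S \ ball p r) ∩ ball p ρ, (dist x p ^ 2)⁻¹ ∂μ
        ≤ ∫ x in ball p ρ \ ball p r, (dist x p ^ 2)⁻¹ ∂μ :=
          setIntegral_mono_set
            (integrableOn_inv_dist_sq_diff_ball measurableSet_ball measure_ball_lt_top.ne hr p)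
            (ae_of_all _ fun _ => by positivity)
            (show (S \ ball p r) ∩ ball p ρ ⊆ ball p ρ \ ball p r from
              fun x hx => ⟨hx.2, hx.1.2⟩).eventuallyLE
      _ = 2 * μ.real (ball 0 1) * Real.log (ρ / r) :=
          setIntegral_ball_diff_ball_inv_dist_sq μ hE p hr hrρ
  · have hfar : ∀ x ∈ (S \ ball p r) \ ball p ρ, ‖(dist x p ^ 2)⁻¹‖ ≤ (ρ ^ 2)⁻¹ := by
      intro x hx
      have hρ : 0 < ρ := hr.trans_le hrρ
      have hρx : ρ ≤ dist x p := not_lt.1 hx.2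
      rw [Real.norm_of_nonneg (by positivity)]
      gcongr
    calc ∫ x in (S \ ball p r) \ ball p ρ, (dist x p ^ 2)⁻¹ ∂μ
        ≤ (ρ ^ 2)⁻¹ * μ.real ((S \ ball p r) \ ball p ρ) :=
          (le_abs_self _).trans (norm_setIntegral_le_of_norm_le_const
            (measure_lt_top_of_subset (sdiff_subset.trans sdiff_subset) hμS) hfar)
      _ ≤ (ρ ^ 2)⁻¹ * μ.real S := by
          gcongr
          exact sdiff_subset.trans sdiff_subset
      _ = μ.real S / ρ ^ 2 := inv_mul_eq_div _ _

end Plane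

lemma setIntegral_diff_ball_inv_dist_sq_le_of_subset_ball {Ω : Set (EuclideanSpace ℝ (Fin 2))}
    (hΩ : MeasurableSet Ω) {q : EuclideanSpace ℝ (Fin 2)} {R : ℝ} (hR : 0 ≤ R)
    (hΩR : Ω ⊆ ball q R)
    (p : EuclideanSpace ℝ (Fin 2)) {lam : ℝ} (hlam : 1 ≤ lam) :
    ∫ x in Ω \ ball p (1 / lam), (dist x p ^ 2)⁻¹ ≤
      2 * Real.pi * Real.log lam + (2 * Real.pi * Real.log (R + 1) + Real.pi) := by
  have hr : 0 < 1 / lam := by positivity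
  have hrR : 1 / lam ≤ R + 1 := by
    calc 1 / lam ≤ 1 := div_le_one_of_le₀ hlam (by positivity)
      _ ≤ R + 1 := by linarith
  have hunit : volume.real (ball (0 : EuclideanSpace ℝ (Fin 2)) 1) = Real.pi := by
    simp [measureReal_def, Real.pi_nonneg]
  have hvol : volume.real Ω / (R + 1) ^ 2 ≤ Real.pi := by
    rw [div_le_iff₀ (by positivity)]
    calc volume.real Ω ≤ volume.real (ball q R) := measureReal_mono hΩR measure_ball_lt_top.ne
      _ = Real.pi * R ^ 2 := by simp [measureReal_def, Real.pi_nonneg, hR, mul_comm]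
      _ ≤ Real.pi * (R + 1) ^ 2 := by gcongr; linarith
  have hlog : Real.log ((R + 1) / (1 / lam)) = Real.log (R + 1) + Real.log lam := by
    rw [one_div, div_inv_eq_mul, Real.log_mul (by positivity) (by positivity)]
  have := setIntegral_diff_ball_inv_dist_sq_le volume finrank_euclideanSpace_fin p hΩ
    (measure_ne_top_of_subset hΩR measure_ball_lt_top.ne) hr hrR
  rw [hunit, hlog] at this
  linarith

/-- for points `x₁,…,x_k ∈ ℝ²`, a measurable `Ω ⊆ B_R(0)` and `λ ≥ 1`, the
integral of `dist(x,{x₁,…,x_k})⁻²` over `Ω` minus the balls of radius `1/λ` around the `xᵢ`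
is bounded by `2πk log λ + C`, with `C` depending only on `k` and `R`. -/
theorem integral_inv_sq_dist_bound (k : ℕ) (R : ℝ) (hR : 0 < R) :
    ∃ C : ℝ, 0 < C ∧
      ∀ (X : Fin k → EuclideanSpace ℝ (Fin 2))
        (Ω : Set (EuclideanSpace ℝ (Fin 2))), MeasurableSet Ω → Ω ⊆ ball 0 R →
        ∀ lam : ℝ, 1 ≤ lam →
          ∫ x in Ω \ ⋃ i, ball (X i) (1 / lam), ((infDist x (Set.range X)) ^ 2)⁻¹ ≤
            2 * Real.pi * k * Real.log lam + C := by
  set c := 2 * Real.pi * Real.log (R + 1) + Real.pi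
  have hc : 0 < c := by
    have : 0 ≤ Real.log (R + 1) := Real.log_nonneg (by linarith)
    positivity
  refine ⟨(k + 1) * c, by positivity, fun X Ω hΩ hΩR lam hlam => ?_⟩
  calc ∫ x in Ω \ ⋃ i, ball (X i) (1 / lam), (infDist x (range X) ^ 2)⁻¹
      ≤ ∑ i, ∫ x in Ω \ ball (X i) (1 / lam), (dist x (X i) ^ 2)⁻¹ :=
        setIntegral_inv_sq_infDist_le_sum hΩ
          (measure_ne_top_of_subset hΩR measure_ball_lt_top.ne) (by positivity) X
    _ ≤ ∑ _i : Fin k, (2 * Real.pi * Real.log lam + c) := Finset.sum_le_sum fun i _ =>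
        setIntegral_diff_ball_inv_dist_sq_le_of_subset_ball hΩ hR.le hΩR (X i) hlam
    _ ≤ 2 * Real.pi * k * Real.log lam + (k + 1) * c := by
        simp only [Finset.sum_const, Finset.card_univ, Fintype.card_fin, nsmul_eq_mul]
        linarith
end

section
/- For every α₁, α₂ ≥ 0, the set Λ_{α₁,α₂} is finite. -/
/-!
Every rule moves a point of `Γ` weakly up and to the right. Weight `⌊x/2⌋ + ⌊y/2⌋` by 4 and add a
score in `{0, …, 3}` recording where the point sits on the chords of the ellipse through it: this
rank strictly increases along every move that changes the point, since a jump by `2m ≥ 2` raises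
a floor, while a move with `m = 0` (or `n = 0`) runs from one end of a chord to the other and
raises the score. As `Γ` is bounded, the rank is bounded, and each point has finitely many
successors; so `Λ` is reached from the six initial points in boundedly many finitely branching
steps.
-/

/-- The subset `Γ_{α₁,α₂}` of an ellipse in `ℝ²`. -/
def GammaSet (a1 a2 : ℝ) : Set (ℝ × ℝ) :=
  {s | 0 ≤ s.1 ∧ 0 ≤ s.2 ∧
    s.1 ^ 2 - s.1 * s.2 + s.2 ^ 2 = 2 * (1 + a1) * s.1 + 2 * (1 + a2) * s.2}

/-- Membership in `Λ_{α₁,α₂}`: the smallest subset of `Γ_{α₁,α₂}` containing the six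
distinguished points and closed under the two horizontal/vertical propagation rules. -/
inductive LambdaMem (a1 a2 : ℝ) : ℝ × ℝ → Prop
  | pt₀ : LambdaMem a1 a2 (0, 0)
  | pt₁ : LambdaMem a1 a2 (2 * (1 + a1), 0)
  | pt₂ : LambdaMem a1 a2 (0, 2 * (1 + a2))
  | pt₃ : LambdaMem a1 a2 (2 * (1 + a1), 2 * (2 + a1 + a2))
  | pt₄ : LambdaMem a1 a2 (2 * (2 + a1 + a2), 2 * (1 + a2))
  | pt₅ : LambdaMem a1 a2 (2 * (2 + a1 + a2), 2 * (2 + a1 + a2))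
  | rule₂ (a b c d : ℝ) (m : ℕ) : LambdaMem a1 a2 (a, b) → (c, d) ∈ GammaSet a1 a2 →
      c = a + 2 * m → b ≤ d → LambdaMem a1 a2 (c, d)
  | rule₃ (a b c d : ℝ) (n : ℕ) : LambdaMem a1 a2 (a, b) → (c, d) ∈ GammaSet a1 a2 →
      d = b + 2 * n → a ≤ c → LambdaMem a1 a2 (c, d)

/-- The set `Λ_{α₁,α₂}`. -/
def LambdaSet (a1 a2 : ℝ) : Set (ℝ × ℝ) := {p | LambdaMem a1 a2 p}

theorem Set.Finite.of_rank_lt_of_finite_successors {α : Type*} {S P : Set α} {R : α → α → Prop}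
    (r : α → ℕ) (N : ℕ) (hP : P.Finite) (hR : ∀ p, {q | R p q}.Finite)
    (hrN : ∀ p ∈ S, r p ≤ N) (hS : ∀ q ∈ S, q ∈ P ∨ ∃ p ∈ S, r p < r q ∧ R p q) :
    S.Finite := by
  have below : ∀ k, {q ∈ S | r q < k}.Finite := by
    intro k
    induction k with
    | zero => simp
    | succ k ih =>
      refine (hP.union (ih.biUnion fun p _ => hR p)).subset ?_
      rintro q ⟨hq, hqk⟩
      rcases hS q hq with hqP | ⟨p, hp, hpq, hRpq⟩
      · exact Or.inl hqP
      · exact Or.inr (Set.mem_biUnion ⟨hp, by omega⟩ hRpq)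
  exact (below (N + 1)).subset fun q hq => ⟨hq, Nat.lt_succ_of_le (hrN q hq)⟩

namespace LambdaSet

variable {a1 a2 : ℝ} {p q : ℝ × ℝ}

lemma swap_mem_gammaSet_iff : p.swap ∈ GammaSet a2 a1 ↔ p ∈ GammaSet a1 a2 := by
  simp only [GammaSet, Set.mem_ofPred_eq, Prod.fst_swap, Prod.snd_swap]
  constructor <;> rintro ⟨hx, hy, he⟩ <;> exact ⟨hy, hx, by linarith⟩

lemma fst_add_snd_le_of_mem_gammaSet (hp : p ∈ GammaSet a1 a2) :
    p.1 + p.2 ≤ 8 * (|1 + a1| + |1 + a2|) := by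
  obtain ⟨hx, hy, he⟩ := hp
  set C := |1 + a1| + |1 + a2|
  have hA : (1 + a1) * p.1 ≤ C * p.1 :=
    mul_le_mul_of_nonneg_right (by linarith [le_abs_self (1 + a1), abs_nonneg (1 + a2)]) hx
  have hB : (1 + a2) * p.2 ≤ C * p.2 :=
    mul_le_mul_of_nonneg_right (by linarith [le_abs_self (1 + a2), abs_nonneg (1 + a1)]) hy
  have hsq : (p.1 + p.2) * (p.1 + p.2) ≤ 8 * C * (p.1 + p.2) := by nlinarith [sq_nonneg (p.1 - p.2)]
  by_contra! hlt
  nlinarith [abs_nonneg (1 + a1), abs_nonneg (1 + a2)]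

lemma snd_eq_or_snd_add_snd_eq (hp : p ∈ GammaSet a1 a2) (hq : q ∈ GammaSet a1 a2)
    (hx : q.1 = p.1) : q.2 = p.2 ∨ q.2 + p.2 = p.1 + 2 * (1 + a2) := by
  obtain ⟨-, -, hep⟩ := hp
  obtain ⟨-, -, heq⟩ := hq
  rw [hx] at heq
  have h : (q.2 - p.2) * (q.2 + p.2 - p.1 - 2 * (1 + a2)) = 0 := by
    linear_combination heq - hep
  rcases mul_eq_zero.1 h with h | h
  · exact Or.inl (by linarith)
  · exact Or.inr (by linarith)

lemma finite_gammaSet_inter_fst_eq (a1 a2 c : ℝ) : {q | q ∈ GammaSet a1 a2 ∧ q.1 = c}.Finite := by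
  rcases Set.eq_empty_or_nonempty {q | q ∈ GammaSet a1 a2 ∧ q.1 = c} with h | ⟨p, hp, hpc⟩
  · simp [h]
  refine (Set.toFinite {p, (c, c + 2 * (1 + a2) - p.2)}).subset ?_
  rintro q ⟨hq, hqc⟩
  rcases snd_eq_or_snd_add_snd_eq hp hq (hqc.trans hpc.symm) with hy | hy
  · exact Or.inl (Prod.ext (hqc.trans hpc.symm) hy)
  · exact Or.inr (Prod.ext hqc (by linarith))

def RightMove (p q : ℝ × ℝ) : Prop := ∃ m : ℕ, q.1 = p.1 + 2 * m ∧ p.2 ≤ q.2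

/-- The moves of rules (2) and (3); a rule (3) move is a rule (2) move of the mirrored points. -/
def Move (p q : ℝ × ℝ) : Prop := RightMove p q ∨ RightMove p.swap q.swap

lemma finite_rightMove_successors (a1 a2 : ℝ) (p : ℝ × ℝ) :
    {q | q ∈ GammaSet a1 a2 ∧ RightMove p q}.Finite := by
  set K := ⌊(8 * (|1 + a1| + |1 + a2|) - p.1) / 2⌋₊
  refine ((Set.finite_Iic K).biUnion
    fun m _ => finite_gammaSet_inter_fst_eq a1 a2 (p.1 + 2 * m)).subset ?_
  rintro q ⟨hq, m, hm, -⟩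
  have hsum := fst_add_snd_le_of_mem_gammaSet hq
  have hy := hq.2.1
  exact Set.mem_biUnion (Nat.le_floor (by linarith) : m ≤ K) ⟨hq, hm⟩

lemma finite_move_successors (a1 a2 : ℝ) (p : ℝ × ℝ) :
    {q | q ∈ GammaSet a1 a2 ∧ Move p q}.Finite := by
  refine ((finite_rightMove_successors a1 a2 p).union
    ((finite_rightMove_successors a2 a1 p.swap).preimage Prod.swap_injective.injOn)).subset ?_
  rintro q ⟨hq, hpq | hpq⟩
  · exact Or.inl ⟨hq, hpq⟩
  · exact Or.inr ⟨swap_mem_gammaSet_iff.2 hq, hpq⟩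

open Classical in
/-- Counts whether `p` is the upper end of the vertical chord of the ellipse through it (the chord's
midpoint has ordinate `(p.1 + 2(1 + α₂)) / 2`), whether it is the right end of the horizontal chord,
and whether it lies on the far side of the line `x + y = 2(1 + α₁) + 2(1 + α₂)`. The count goes up
along every move within a chord. -/
noncomputable def chordScore (a1 a2 : ℝ) (p : ℝ × ℝ) : ℕ :=
  (if p.1 + 2 * (1 + a2) ≤ 2 * p.2 then 1 else 0) +
    (if p.2 + 2 * (1 + a1) ≤ 2 * p.1 then 1 else 0) +
    (if 2 * (1 + a1) + 2 * (1 + a2) ≤ p.1 + p.2 then 1 else 0)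

lemma chordScore_le_three (a1 a2 : ℝ) (p : ℝ × ℝ) : chordScore a1 a2 p ≤ 3 := by
  unfold chordScore; split_ifs <;> norm_num

lemma chordScore_swap (a1 a2 : ℝ) (p : ℝ × ℝ) : chordScore a2 a1 p.swap = chordScore a1 a2 p := by
  simp only [chordScore, Prod.fst_swap, Prod.snd_swap, add_comm (2 * (1 + a2)) (2 * (1 + a1)),
    add_comm p.2 p.1]
  ring

lemma chordScore_lt_of_fst_eq (hp : p ∈ GammaSet a1 a2) (hq : q ∈ GammaSet a1 a2)
    (hx : q.1 = p.1) (hy : p.2 < q.2) : chordScore a1 a2 p < chordScore a1 a2 q := by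
  have hsum := (snd_eq_or_snd_add_snd_eq hp hq hx).resolve_left hy.ne'
  unfold chordScore
  rw [if_neg (show ¬p.1 + 2 * (1 + a2) ≤ 2 * p.2 by linarith),
    if_pos (show q.1 + 2 * (1 + a2) ≤ 2 * q.2 by linarith)]
  split_ifs <;> first | omega | (exfalso; linarith)

noncomputable def rank (a1 a2 : ℝ) (p : ℝ × ℝ) : ℕ :=
  4 * (⌊p.1 / 2⌋₊ + ⌊p.2 / 2⌋₊) + chordScore a1 a2 p

lemma rank_swap (a1 a2 : ℝ) (p : ℝ × ℝ) : rank a2 a1 p.swap = rank a1 a2 p := by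
  simp only [rank, chordScore_swap, Prod.fst_swap, Prod.snd_swap, add_comm ⌊p.2 / 2⌋₊]

lemma rank_le_of_mem_gammaSet (hp : p ∈ GammaSet a1 a2) :
    rank a1 a2 p ≤ 4 * (2 * ⌊8 * (|1 + a1| + |1 + a2|) / 2⌋₊) + 3 := by
  have hsum := fst_add_snd_le_of_mem_gammaSet hp
  obtain ⟨hx, hy, -⟩ := hp
  have hfx : ⌊p.1 / 2⌋₊ ≤ ⌊8 * (|1 + a1| + |1 + a2|) / 2⌋₊ := Nat.floor_le_floor (by linarith)
  have hfy : ⌊p.2 / 2⌋₊ ≤ ⌊8 * (|1 + a1| + |1 + a2|) / 2⌋₊ := Nat.floor_le_floor (by linarith)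
  have := chordScore_le_three a1 a2 p
  unfold rank; omega

/-- A move by `2m ≥ 2` to the right outweighs any change of `chordScore`; a move with `m = 0`
runs along a vertical chord. -/
lemma eq_or_rank_lt_of_rightMove (hp : p ∈ GammaSet a1 a2) (hq : q ∈ GammaSet a1 a2)
    (h : RightMove p q) : q = p ∨ rank a1 a2 p < rank a1 a2 q := by
  obtain ⟨m, hm, hy⟩ := h
  have hfx : ⌊q.1 / 2⌋₊ = ⌊p.1 / 2⌋₊ + m := by
    rw [hm, show (p.1 + 2 * m) / 2 = p.1 / 2 + m by ring, Nat.floor_add_natCast (by linarith [hp.1])]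
  have hfy : ⌊p.2 / 2⌋₊ ≤ ⌊q.2 / 2⌋₊ := Nat.floor_le_floor (by linarith)
  have := chordScore_le_three a1 a2 p
  unfold rank
  rcases Nat.eq_zero_or_pos m with rfl | hm0
  · rcases hy.eq_or_lt with hy | hy
    · exact Or.inl (Prod.ext (by simpa using hm) hy.symm)
    · have := chordScore_lt_of_fst_eq hp hq (by simpa using hm) hy
      right; omega
  · right; omega

lemma eq_or_rank_lt_of_move (hp : p ∈ GammaSet a1 a2) (hq : q ∈ GammaSet a1 a2)
    (h : Move p q) : q = p ∨ rank a1 a2 p < rank a1 a2 q := by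
  rcases h with h | h
  · exact eq_or_rank_lt_of_rightMove hp hq h
  · rw [← rank_swap, ← rank_swap a1 a2 q]
    exact (eq_or_rank_lt_of_rightMove (swap_mem_gammaSet_iff.2 hp) (swap_mem_gammaSet_iff.2 hq)
      h).imp_left Prod.swap_inj.1

abbrev seeds (a1 a2 : ℝ) : Set (ℝ × ℝ) :=
  {(0, 0), (2 * (1 + a1), 0), (0, 2 * (1 + a2)), (2 * (1 + a1), 2 * (2 + a1 + a2)),
    (2 * (2 + a1 + a2), 2 * (1 + a2)), (2 * (2 + a1 + a2), 2 * (2 + a1 + a2))}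

lemma _root_.LambdaMem.mem_gammaSet (h1 : -1 ≤ a1) (h2 : -1 ≤ a2) (h : LambdaMem a1 a2 p) :
    p ∈ GammaSet a1 a2 := by
  induction h with
  | rule₂ _ _ _ _ _ _ hΓ => exact hΓ
  | rule₃ _ _ _ _ _ _ hΓ => exact hΓ
  | _ => refine ⟨?_, ?_, ?_⟩ <;> dsimp only <;> linarith

lemma _root_.LambdaMem.mem_seeds_or_exists_move (h1 : -1 ≤ a1) (h2 : -1 ≤ a2)
    (h : LambdaMem a1 a2 q) : q ∈ seeds a1 a2 ∨
      ∃ p, LambdaMem a1 a2 p ∧ rank a1 a2 p < rank a1 a2 q ∧ q ∈ GammaSet a1 a2 ∧ Move p q := by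
  induction h with
  | rule₂ _ _ _ _ m hp hq hc hd ih =>
    rcases eq_or_rank_lt_of_move (hp.mem_gammaSet h1 h2) hq (Or.inl ⟨m, hc, hd⟩) with heq | hlt
    · rwa [heq]
    · exact Or.inr ⟨_, hp, hlt, hq, Or.inl ⟨m, hc, hd⟩⟩
  | rule₃ _ _ _ _ n hp hq hd hc ih =>
    rcases eq_or_rank_lt_of_move (hp.mem_gammaSet h1 h2) hq (Or.inr ⟨n, hd, hc⟩) with heq | hlt
    · rwa [heq]
    · exact Or.inr ⟨_, hp, hlt, hq, Or.inr ⟨n, hd, hc⟩⟩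
  | _ => left; simp [seeds]

end LambdaSet

/-- for every `α₁, α₂ ≥ 0`, the set `Λ_{α₁,α₂}` is finite. -/
theorem LambdaSet_finite (a1 a2 : ℝ) (h1 : 0 ≤ a1) (h2 : 0 ≤ a2) :
    (LambdaSet a1 a2).Finite := by
  have h1' : -1 ≤ a1 := by linarith
  have h2' : -1 ≤ a2 := by linarith
  exact Set.Finite.of_rank_lt_of_finite_successors (LambdaSet.rank a1 a2) _
    (Set.toFinite (LambdaSet.seeds a1 a2)) (LambdaSet.finite_move_successors a1 a2)
    (fun _ hp => LambdaSet.rank_le_of_mem_gammaSet (hp.mem_gammaSet h1' h2'))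
    (fun _ hq => hq.mem_seeds_or_exists_move h1' h2')
end

section
/- Λ_{0,0} consists exactly of the six points (0,0), (2,0), (0,2), (4,2), (2,4), (4,4); that is, the closure rules (2) and (3) produce no points beyond the six initial points when α₁ = α₂ = 0. -/
/-- Auxiliary predicate: `(a, b)` is one of the six distinguished points for `α₁ = α₂ = 0`. -/
def SixProp (a b : ℝ) : Prop :=
  (a = 0 ∧ b = 0) ∨ (a = 2 ∧ b = 0) ∨ (a = 0 ∧ b = 2) ∨
  (a = 4 ∧ b = 2) ∨ (a = 2 ∧ b = 4) ∨ (a = 4 ∧ b = 4)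

lemma six_swap {a b : ℝ} (h : SixProp a b) : SixProp b a := by
  unfold SixProp at *; tauto

lemma gamma_swap {c d : ℝ} (h : (c, d) ∈ GammaSet 0 0) : (d, c) ∈ GammaSet 0 0 := by
  obtain ⟨h1, h2, h3⟩ := h
  exact ⟨h2, h1, by simp only at h3 ⊢; linarith [h3]⟩

lemma step (a b c d : ℝ) (m : ℕ) (hab : SixProp a b) (hΓ : (c, d) ∈ GammaSet 0 0)
    (hc : c = a + 2 * m) (hbd : b ≤ d) : SixProp c d := by
  obtain ⟨hc0, hd0, he⟩ := hΓ
  simp only at he hc0 hd0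
  have hc6 : c < 6 := by nlinarith [sq_nonneg (2 * d - c - 2)]
  unfold SixProp at hab ⊢
  rcases hab with ⟨ha, hb⟩ | ⟨ha, hb⟩ | ⟨ha, hb⟩ | ⟨ha, hb⟩ | ⟨ha, hb⟩ | ⟨ha, hb⟩ <;>
      subst ha <;> subst hb <;>
    · have hm : m < 3 := by
        have h3 : (m : ℝ) < 3 := by linarith
        exact_mod_cast h3
      interval_cases m <;> norm_num at hc <;> subst hc <;>
      first
        | linarith
        | (have hd2 : d = 0 ∨ d = 2 := by
             have h0 : d * (d - 2) = 0 := by linear_combination he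
             rcases mul_eq_zero.mp h0 with h | h
             exacts [Or.inl h, Or.inr (by linarith)]
           rcases hd2 with h | h <;> subst h <;> first | linarith | norm_num)
        | (have hd2 : d = 0 ∨ d = 4 := by
             have h0 : d * (d - 4) = 0 := by linear_combination he
             rcases mul_eq_zero.mp h0 with h | h
             exacts [Or.inl h, Or.inr (by linarith)]
           rcases hd2 with h | h <;> subst h <;> first | linarith | norm_num)
        | (have hd2 : d = 2 ∨ d = 4 := by
             have h0 : (d - 2) * (d - 4) = 0 := by linear_combination he
             rcases mul_eq_zero.mp h0 with h | h
             exacts [Or.inl (by linarith), Or.inr (by linarith)]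
           rcases hd2 with h | h <;> subst h <;> first | linarith | norm_num)

lemma step' (a b c d : ℝ) (n : ℕ) (hab : SixProp a b) (hΓ : (c, d) ∈ GammaSet 0 0)
    (hd : d = b + 2 * n) (hac : a ≤ c) : SixProp c d :=
  six_swap (step b a d c n (six_swap hab) (gamma_swap hΓ) hd hac)

/-- `Λ_{0,0}` consists exactly of the six points
`(0,0), (2,0), (0,2), (4,2), (2,4), (4,4)`. -/
theorem LambdaSet_zero_zero :
    LambdaSet 0 0 =
      ({(0, 0), (2, 0), (0, 2), (4, 2), (2, 4), (4, 4)} : Set (ℝ × ℝ)) := by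
  ext p
  simp only [Set.mem_insert_iff, Set.mem_singleton_iff, Prod.ext_iff]
  constructor
  · intro h
    have key : SixProp p.1 p.2 := by
      induction h with
      | pt₀ => left; exact ⟨rfl, rfl⟩
      | pt₁ => right; left; norm_num
      | pt₂ => right; right; left; norm_num
      | pt₃ => right; right; right; right; left; norm_num
      | pt₄ => right; right; right; left; norm_num
      | pt₅ => right; right; right; right; right; norm_num
      | rule₂ a b c d m _ hΓ hc hbd ih => exact step a b c d m ih hΓ hc hbd
      | rule₃ a b c d n _ hΓ hd hac ih => exact step' a b c d n ih hΓ hd hac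
    exact key
  · intro h
    rcases h with ⟨h1, h2⟩ | ⟨h1, h2⟩ | ⟨h1, h2⟩ | ⟨h1, h2⟩ | ⟨h1, h2⟩ | ⟨h1, h2⟩ <;>
      (have : p = (p.1, p.2) := rfl
       rw [show p = (p.1, p.2) from rfl, h1, h2])
    · exact LambdaMem.pt₀
    · have : ((2 : ℝ), (0 : ℝ)) = (2 * (1 + 0), 0) := by norm_num
      rw [this]; exact LambdaMem.pt₁
    · have : ((0 : ℝ), (2 : ℝ)) = (0, 2 * (1 + 0)) := by norm_num
      rw [this]; exact LambdaMem.pt₂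
    · have : ((4 : ℝ), (2 : ℝ)) = (2 * (2 + 0 + 0), 2 * (1 + 0)) := by norm_num
      rw [this]; exact LambdaMem.pt₄
    · have : ((2 : ℝ), (4 : ℝ)) = (2 * (1 + 0), 2 * (2 + 0 + 0)) := by norm_num
      rw [this]; exact LambdaMem.pt₃
    · have : ((4 : ℝ), (4 : ℝ)) = (2 * (2 + 0 + 0), 2 * (2 + 0 + 0)) := by norm_num
      rw [this]; exact LambdaMem.pt₅
end

section
/- For any m ∈ ℕ and any weights α_{1,j}, α_{2,j} ≥ 0 (j = 1,…,m), the set Λ₀ is a closed and discrete subset of ℝ². -/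
/-- The set `Λ₀ = 2π { (2p,2q) + ∑ⱼ nⱼ (aⱼ,bⱼ) : p,q ∈ ℕ∪{0}, nⱼ ∈ {0,1},
(aⱼ,bⱼ) ∈ Λ_{α_{1,j},α_{2,j}} }`. -/
def LambdaZero (m : ℕ) (a1 a2 : Fin m → ℝ) : Set (ℝ × ℝ) :=
  {z | ∃ (p q : ℕ) (n : Fin m → ℕ) (ab : Fin m → ℝ × ℝ),
    (∀ j, n j = 0 ∨ n j = 1) ∧ (∀ j, ab j ∈ LambdaSet (a1 j) (a2 j)) ∧
      z = (2 * Real.pi) • (((2 * p : ℝ), (2 * q : ℝ)) + ∑ j, (n j : ℝ) • ab j)}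

/-!
Up to the factor `2π`, `Λ₀` consists of the points `(2p, 2q) + s` with `s` in the finite set of sums
`∑ⱼ nⱼ (aⱼ, bⱼ)`, provided every `Λ_{α₁,α₂}` is finite; then every ball contains finitely many points
of `Λ₀`, which makes it closed and discrete.

`Λ_{α₁,α₂}` lies in the bounded set `Γ_{α₁,α₂}`, and a line meets the ellipse in at most two points,
so each point has finitely many successors under rules (2) and (3). Every successor different from
the point itself lies weakly above and to the right of it, and this lets a bounded natural-number
potential decrease strictly along each such move. So `Λ_{α₁,α₂}` is generated in boundedly many
steps from six points, with finite branching.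
-/

open Set Filter Topology Metric

theorem isClosed_and_isDiscrete_of_forall_finite_inter {X : Type*} [TopologicalSpace X]
    [T1Space X] {S : Set X} (h : ∀ x, ∃ U ∈ 𝓝 x, (U ∩ S).Finite) :
    IsClosed S ∧ IsDiscrete S := by
  refine isClosed_and_discrete_iff.mpr fun x => disjoint_principal_right.mpr ?_
  obtain ⟨U, hU, hfin⟩ := h x
  have hV : U ∩ ((U ∩ S) \ {x})ᶜ ∈ 𝓝 x :=
    inter_mem hU (hfin.sdiff.isClosed.compl_mem_nhds fun hx => hx.2 rfl)
  refine mem_nhdsWithin_iff_exists_mem_nhds_inter.mpr ⟨_, hV, ?_⟩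
  rintro y ⟨⟨hyU, hyT⟩, hyx⟩ hyS
  exact hyT ⟨⟨hyU, hyS⟩, hyx⟩

theorem finite_of_potential_descent {α : Type*} {S B : Set α} {next : α → Set α}
    (μ : α → ℕ) (N : ℕ) (hB : B.Finite) (hnext : ∀ r ∈ S, (next r).Finite)
    (hμ : ∀ p ∈ S, μ p ≤ N) (hS : ∀ p ∈ S, p ∈ B ∨ ∃ r ∈ S, μ p < μ r ∧ p ∈ next r) :
    S.Finite := by
  suffices h : ∀ k, {p ∈ S | N ≤ μ p + k}.Finite from
    (h N).subset fun p hp => ⟨hp, Nat.le_add_left N (μ p)⟩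
  intro k
  induction k with
  | zero =>
    refine hB.subset fun p ⟨hp, hN⟩ => (hS p hp).resolve_right ?_
    rintro ⟨r, hr, hlt, -⟩
    have := hμ r hr
    omega
  | succ k ih =>
    refine (hB.union (ih.biUnion fun r hr => hnext r hr.1)).subset fun p ⟨hp, hN⟩ => ?_
    rcases hS p hp with hpB | ⟨r, hr, hlt, hpr⟩
    · exact Or.inl hpB
    · exact Or.inr (mem_biUnion ⟨hr, by omega⟩ hpr)

theorem Nat.floor_lt_floor_of_add_one_le {R : Type*} [Semiring R] [LinearOrder R]
    [FloorSemiring R] [IsStrictOrderedRing R] {x y : R} (hx : 0 ≤ x) (h : x + 1 ≤ y) :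
    ⌊x⌋₊ < ⌊y⌋₊ := by
  rw [← Nat.succ_le_iff, Nat.succ_eq_add_one, ← Nat.floor_add_one hx]
  exact Nat.floor_le_floor h

namespace GammaSet

variable {a1 a2 : ℝ} {p q : ℝ × ℝ}

theorem nonneg (hp : p ∈ GammaSet a1 a2) : 0 ≤ p := ⟨hp.1, hp.2.1⟩

theorem swap_mem_iff : p.swap ∈ GammaSet a2 a1 ↔ p ∈ GammaSet a1 a2 := by
  simp only [GammaSet, mem_ofPred_eq, Prod.fst_swap, Prod.snd_swap]
  constructor <;> rintro ⟨hx, hy, he⟩ <;> exact ⟨hy, hx, by linarith⟩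

theorem snd_add_snd_of_fst_eq (hp : p ∈ GammaSet a1 a2) (hq : q ∈ GammaSet a1 a2)
    (h : p.1 = q.1) (hne : p.2 ≠ q.2) : p.2 + q.2 = p.1 + 2 * (1 + a2) := by
  obtain ⟨-, -, ep⟩ := hp
  obtain ⟨-, -, eq⟩ := hq
  rw [← h] at eq
  have hfac : (p.2 - q.2) * (p.2 + q.2 - (p.1 + 2 * (1 + a2))) = 0 := by
    linear_combination ep - eq
  exact sub_eq_zero.mp ((mul_eq_zero.mp hfac).resolve_left (sub_ne_zero.mpr hne))

theorem fst_add_fst_of_snd_eq (hp : p ∈ GammaSet a1 a2) (hq : q ∈ GammaSet a1 a2)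
    (h : p.2 = q.2) (hne : p.1 ≠ q.1) : p.1 + q.1 = p.2 + 2 * (1 + a1) :=
  snd_add_snd_of_fst_eq (swap_mem_iff.mpr hp) (swap_mem_iff.mpr hq) h hne

theorem finite_fst_eq (a1 a2 c : ℝ) : {q | q ∈ GammaSet a1 a2 ∧ q.1 = c}.Finite := by
  rcases eq_empty_or_nonempty {q | q ∈ GammaSet a1 a2 ∧ q.1 = c} with h | ⟨q₀, hq₀, hc₀⟩
  · exact h ▸ finite_empty
  refine (toFinite {q₀, (c, c + 2 * (1 + a2) - q₀.2)}).subset ?_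
  rintro q ⟨hq, hc⟩
  by_cases h : q₀.2 = q.2
  · exact Or.inl (Prod.ext (hc.trans hc₀.symm) h.symm)
  · have := snd_add_snd_of_fst_eq hq₀ hq (hc₀.trans hc.symm) h
    exact Or.inr (Prod.ext hc (by simp only; linarith))

def bound (a1 a2 : ℝ) : ℝ := 8 * (2 + a1 + a2)

/-- `(x + y)² ≤ 4 (x² - x y + y²) = 4 (2 (1 + α₁) x + 2 (1 + α₂) y) ≤ 8 (2 + α₁ + α₂) (x + y)`. -/
theorem fst_add_snd_le (h1 : -1 ≤ a1) (h2 : -1 ≤ a2) (hp : p ∈ GammaSet a1 a2) :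
    p.1 + p.2 ≤ bound a1 a2 := by
  obtain ⟨hx, hy, he⟩ := hp
  unfold bound
  nlinarith [sq_nonneg (p.1 - p.2), mul_nonneg (by linarith : (0:ℝ) ≤ 1 + a2) hx,
    mul_nonneg (by linarith : (0:ℝ) ≤ 1 + a1) hy]

theorem fst_le (h1 : -1 ≤ a1) (h2 : -1 ≤ a2) (hp : p ∈ GammaSet a1 a2) : p.1 ≤ bound a1 a2 := by
  linarith [fst_add_snd_le h1 h2 hp, hp.2.1]

theorem snd_le (h1 : -1 ≤ a1) (h2 : -1 ≤ a2) (hp : p ∈ GammaSet a1 a2) : p.2 ≤ bound a1 a2 := by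
  linarith [fst_add_snd_le h1 h2 hp, hp.1]

theorem finite_fst_shift (h1 : -1 ≤ a1) (h2 : -1 ≤ a2) (x₀ : ℝ) :
    {q | q ∈ GammaSet a1 a2 ∧ ∃ m : ℕ, q.1 = x₀ + 2 * m}.Finite := by
  refine ((finite_Iic ⌊(bound a1 a2 - x₀) / 2⌋₊).biUnion
    fun m _ => finite_fst_eq a1 a2 (x₀ + 2 * m)).subset ?_
  rintro q ⟨hq, m, hm⟩
  refine mem_biUnion (x := m) (Nat.le_floor ?_) ⟨hq, hm⟩
  linarith [fst_le h1 h2 hq]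

theorem finite_snd_shift (h1 : -1 ≤ a1) (h2 : -1 ≤ a2) (y₀ : ℝ) :
    {q | q ∈ GammaSet a1 a2 ∧ ∃ n : ℕ, q.2 = y₀ + 2 * n}.Finite :=
  ((finite_fst_shift h2 h1 y₀).preimage Prod.swap_injective.injOn).subset
    fun _ ⟨hq, hn⟩ => ⟨swap_mem_iff.mpr hq, hn⟩

end GammaSet

/-- The points reachable from `r` by rule (2) or (3), without the order conditions. -/
def stepSet (a1 a2 : ℝ) (r : ℝ × ℝ) : Set (ℝ × ℝ) :=
  {q | q ∈ GammaSet a1 a2 ∧ ((∃ m : ℕ, q.1 = r.1 + 2 * m) ∨ ∃ n : ℕ, q.2 = r.2 + 2 * n)}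

theorem finite_stepSet {a1 a2 : ℝ} (h1 : -1 ≤ a1) (h2 : -1 ≤ a2) (r : ℝ × ℝ) :
    (stepSet a1 a2 r).Finite :=
  ((GammaSet.finite_fst_shift h1 h2 r.1).union (GammaSet.finite_snd_shift h1 h2 r.2)).subset
    fun _ ⟨hq, hstep⟩ => hstep.elim (fun hm => Or.inl ⟨hq, hm⟩) fun hn => Or.inr ⟨hq, hn⟩

/-- `2y = x + 2(1 + α₂)` and `2x = y + 2(1 + α₁)` are the loci of midpoints of the vertical and of
the horizontal chords of the ellipse, so moving up a vertical chord or right along a horizontal one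
crosses one of them; all three lines pass through the centre of the ellipse. -/
noncomputable def arcRank (a1 a2 : ℝ) (p : ℝ × ℝ) : ℕ :=
  (if 2 * p.2 < p.1 + 2 * (1 + a2) then 1 else 0) +
    (if 2 * p.1 < p.2 + 2 * (1 + a1) then 1 else 0) +
    (if p.1 + p.2 < 2 * (1 + a1) + 2 * (1 + a2) then 1 else 0)

/-- A move by at least `2` in one coordinate lowers one floor by at least one, which outweighs
`arcRank ≤ 3`; a move keeping one coordinate lowers `arcRank`. -/
noncomputable def potential (a1 a2 : ℝ) (p : ℝ × ℝ) : ℕ :=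
  4 * (⌊(GammaSet.bound a1 a2 - p.1) / 2⌋₊ + ⌊(GammaSet.bound a1 a2 - p.2) / 2⌋₊) +
    arcRank a1 a2 p

section Potential

variable {a1 a2 : ℝ} {p q : ℝ × ℝ}

open GammaSet

theorem arcRank_le_three : arcRank a1 a2 p ≤ 3 := by
  unfold arcRank
  split_ifs <;> omega

theorem arcRank_lt_of_fst_eq (hp : p ∈ GammaSet a1 a2) (hq : q ∈ GammaSet a1 a2)
    (h : p.1 = q.1) (hlt : p.2 < q.2) : arcRank a1 a2 q < arcRank a1 a2 p := by
  have := snd_add_snd_of_fst_eq hp hq h hlt.ne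
  unfold arcRank
  split_ifs <;> first | omega | linarith

theorem arcRank_lt_of_snd_eq (hp : p ∈ GammaSet a1 a2) (hq : q ∈ GammaSet a1 a2)
    (h : p.2 = q.2) (hlt : p.1 < q.1) : arcRank a1 a2 q < arcRank a1 a2 p := by
  have := fst_add_fst_of_snd_eq hp hq h hlt.ne
  unfold arcRank
  split_ifs <;> first | omega | linarith

theorem potential_le (hp : p ∈ GammaSet a1 a2) :
    potential a1 a2 p ≤ 8 * ⌊bound a1 a2 / 2⌋₊ + 3 := by
  have hx : ⌊(bound a1 a2 - p.1) / 2⌋₊ ≤ ⌊bound a1 a2 / 2⌋₊ :=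
    Nat.floor_le_floor (by linarith [hp.1])
  have hy : ⌊(bound a1 a2 - p.2) / 2⌋₊ ≤ ⌊bound a1 a2 / 2⌋₊ :=
    Nat.floor_le_floor (by linarith [hp.2.1])
  have := arcRank_le_three (a1 := a1) (a2 := a2) (p := p)
  unfold potential
  omega

theorem potential_lt (h1 : -1 ≤ a1) (h2 : -1 ≤ a2) (hp : p ∈ GammaSet a1 a2)
    (hq : q ∈ stepSet a1 a2 p) (hle : p ≤ q) (hne : q ≠ p) :
    potential a1 a2 q < potential a1 a2 p := by
  obtain ⟨hq, hstep⟩ := hq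
  have hx : ⌊(bound a1 a2 - q.1) / 2⌋₊ ≤ ⌊(bound a1 a2 - p.1) / 2⌋₊ :=
    Nat.floor_le_floor (by linarith [hle.1])
  have hy : ⌊(bound a1 a2 - q.2) / 2⌋₊ ≤ ⌊(bound a1 a2 - p.2) / 2⌋₊ :=
    Nat.floor_le_floor (by linarith [hle.2])
  have hr := arcRank_le_three (a1 := a1) (a2 := a2) (p := q)
  unfold potential
  by_cases hx₁ : p.1 = q.1
  · have hlt : p.2 < q.2 := hle.2.lt_of_ne fun h => hne (Prod.ext hx₁.symm h.symm)
    have := arcRank_lt_of_fst_eq hp hq hx₁ hlt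
    omega
  by_cases hy₁ : p.2 = q.2
  · have hlt : p.1 < q.1 := hle.1.lt_of_ne hx₁
    have := arcRank_lt_of_snd_eq hp hq hy₁ hlt
    omega
  rcases hstep with ⟨_ | m, hm⟩ | ⟨_ | n, hn⟩
  · simp [hm] at hx₁
  · push_cast at hm
    have : ⌊(bound a1 a2 - q.1) / 2⌋₊ < ⌊(bound a1 a2 - p.1) / 2⌋₊ :=
      Nat.floor_lt_floor_of_add_one_le (by linarith [fst_le h1 h2 hq]) (by linarith)
    omega
  · simp [hn] at hy₁
  · push_cast at hn
    have : ⌊(bound a1 a2 - q.2) / 2⌋₊ < ⌊(bound a1 a2 - p.2) / 2⌋₊ :=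
      Nat.floor_lt_floor_of_add_one_le (by linarith [snd_le h1 h2 hq]) (by linarith)
    omega

end Potential

def baseSet (a1 a2 : ℝ) : Set (ℝ × ℝ) :=
  {(0, 0), (2 * (1 + a1), 0), (0, 2 * (1 + a2)), (2 * (1 + a1), 2 * (2 + a1 + a2)),
    (2 * (2 + a1 + a2), 2 * (1 + a2)), (2 * (2 + a1 + a2), 2 * (2 + a1 + a2))}

namespace LambdaMem

variable {a1 a2 : ℝ} {p : ℝ × ℝ}

theorem mem_gammaSet_s11 (h1 : -1 ≤ a1) (h2 : -1 ≤ a2) (hp : LambdaMem a1 a2 p) :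
    p ∈ GammaSet a1 a2 := by
  induction hp with
  | rule₂ _ _ _ _ _ _ hq => exact hq
  | rule₃ _ _ _ _ _ _ hq => exact hq
  | _ => refine ⟨?_, ?_, ?_⟩ <;> dsimp only <;> linarith

theorem mem_baseSet_or_exists_step (h1 : -1 ≤ a1) (h2 : -1 ≤ a2) (hp : LambdaMem a1 a2 p) :
    p ∈ baseSet a1 a2 ∨ ∃ r ∈ LambdaSet a1 a2,
      potential a1 a2 p < potential a1 a2 r ∧ p ∈ stepSet a1 a2 r := by
  induction hp with
  | rule₂ a b c d m hr hq hc hbd ih =>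
    by_cases hne : ((c, d) : ℝ × ℝ) = (a, b)
    · exact hne ▸ ih
    have hstep : (c, d) ∈ stepSet a1 a2 (a, b) := ⟨hq, Or.inl ⟨m, hc⟩⟩
    have hle : ((a, b) : ℝ × ℝ) ≤ (c, d) := ⟨hc ▸ le_add_of_nonneg_right (by positivity), hbd⟩
    exact Or.inr ⟨(a, b), hr, potential_lt h1 h2 (hr.mem_gammaSet_s11 h1 h2) hstep hle hne, hstep⟩
  | rule₃ a b c d n hr hq hd hac ih =>
    by_cases hne : ((c, d) : ℝ × ℝ) = (a, b)
    · exact hne ▸ ih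
    have hstep : (c, d) ∈ stepSet a1 a2 (a, b) := ⟨hq, Or.inr ⟨n, hd⟩⟩
    have hle : ((a, b) : ℝ × ℝ) ≤ (c, d) := ⟨hac, hd ▸ le_add_of_nonneg_right (by positivity)⟩
    exact Or.inr ⟨(a, b), hr, potential_lt h1 h2 (hr.mem_gammaSet_s11 h1 h2) hstep hle hne, hstep⟩
  | _ => left; simp [baseSet]

end LambdaMem

theorem finite_lambdaSet {a1 a2 : ℝ} (h1 : -1 ≤ a1) (h2 : -1 ≤ a2) : (LambdaSet a1 a2).Finite :=
  finite_of_potential_descent (potential a1 a2) _ (by unfold baseSet; exact toFinite _)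
    (fun r _ => finite_stepSet h1 h2 r) (fun _ hp => potential_le (hp.mem_gammaSet_s11 h1 h2))
    fun _ hp => hp.mem_baseSet_or_exists_step h1 h2

theorem finite_lambdaZero_inter_closedBall {m : ℕ} {a1 a2 : Fin m → ℝ}
    (h1 : ∀ j, -1 ≤ a1 j) (h2 : ∀ j, -1 ≤ a2 j) (R : ℝ) :
    (LambdaZero m a1 a2 ∩ closedBall 0 R).Finite := by
  set F := (fun f : Fin m → ℝ × ℝ => ∑ j, f j) ''
    pi univ fun j => insert 0 (LambdaSet (a1 j) (a2 j))
  have hF : F.Finite := (Finite.pi fun j => (finite_lambdaSet (h1 j) (h2 j)).insert 0).image _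
  refine ((((finite_Iic ⌊R⌋₊).prod (finite_Iic ⌊R⌋₊)).prod hF).image
    fun x : (ℕ × ℕ) × (ℝ × ℝ) =>
      (2 * Real.pi) • (((2 * x.1.1 : ℝ), (2 * x.1.2 : ℝ)) + x.2)).subset ?_
  rintro _ ⟨⟨p, q, n, ab, hn, hab, rfl⟩, hR⟩
  set s := ∑ j, (n j : ℝ) • ab j
  have hs : 0 ≤ s := Finset.sum_nonneg fun j _ =>
    smul_nonneg (Nat.cast_nonneg _) (GammaSet.nonneg ((hab j).mem_gammaSet_s11 (h1 j) (h2 j)))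
  have hsF : s ∈ F := ⟨fun j => (n j : ℝ) • ab j,
    fun j _ => by rcases hn j with h | h <;> simp [h, hab j], rfl⟩
  have hnorm := mem_closedBall_zero_iff.mp hR
  have h1R := (le_abs_self _).trans ((norm_fst_le _).trans hnorm)
  have h2R := (le_abs_self _).trans ((norm_snd_le _).trans hnorm)
  simp only [Prod.smul_fst, Prod.smul_snd, Prod.fst_add, Prod.snd_add, smul_eq_mul] at h1R h2R
  have hs₁ : 0 ≤ s.1 := hs.1
  have hs₂ : 0 ≤ s.2 := hs.2
  have hpR : (p : ℝ) ≤ R := by nlinarith [Real.pi_gt_three, Nat.cast_nonneg (α := ℝ) p]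
  have hqR : (q : ℝ) ≤ R := by nlinarith [Real.pi_gt_three, Nat.cast_nonneg (α := ℝ) q]
  exact ⟨((p, q), s), ⟨⟨Nat.le_floor hpR, Nat.le_floor hqR⟩, hsF⟩, rfl⟩

/-- for nonnegative weights, `Λ₀` is a closed and discrete subset of `ℝ²`. -/
theorem LambdaZero_closed_discrete (m : ℕ) (a1 a2 : Fin m → ℝ)
    (h1 : ∀ j, 0 ≤ a1 j) (h2 : ∀ j, 0 ≤ a2 j) :
    IsClosed (LambdaZero m a1 a2) ∧ DiscreteTopology (LambdaZero m a1 a2) := by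
  rw [← isDiscrete_iff_discreteTopology]
  refine isClosed_and_isDiscrete_of_forall_finite_inter fun x =>
    ⟨closedBall 0 (‖x‖ + 1), closedBall_mem_nhds_of_mem (by simp), ?_⟩
  rw [inter_comm]
  exact finite_lambdaZero_inter_closedBall (fun j => by linarith [h1 j])
    (fun j => by linarith [h2 j]) _
end

section
/- Let (Σ,d) be a compact metric space, μ a Borel probability measure on Σ, k ∈ ℕ, x₁,…,x_k ∈ Σ, s > 0 and ε ∈ (0,1), and suppose μ( ⋃_{i=1}^k B_s(x_i) ) ≥ 1 − ε. Then there exist t₁,…,t_k ≥ 0 with ∑_{i=1}^k t_i = 1 such that the measure σ = ∑_{i=1}^k t_i δ_{x_i} satisfies d_KR(μ, σ) ≤ 2ε + s. In particular d_KR(μ, Σ_k) ≤ 2ε + s. -/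
open MeasureTheory

/-- The Kantorovich–Rubinstein distance between two Borel measures on a metric space:
`d_KR(μ,ν) = sup { |∫ φ dμ − ∫ φ dν| : sup|φ| ≤ 1, φ 1-Lipschitz }`. -/
noncomputable def dKR {X : Type*} [MeasurableSpace X] [MetricSpace X]
    (μ ν : Measure X) : ℝ :=
  sSup {r | ∃ φ : X → ℝ, (∀ x, |φ x| ≤ 1) ∧ LipschitzWith 1 φ ∧
    r = |∫ x, φ x ∂μ - ∫ x, φ x ∂ν|}

/-- The `d_KR`-distance from a measure to a set of measures. -/
noncomputable def dKRSet {X : Type*} [MeasurableSpace X] [MetricSpace X]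
    (μ : Measure X) (S : Set (Measure X)) : ℝ :=
  sInf {r | ∃ σ ∈ S, r = dKR μ σ}

/-- The set `Σ_k` of formal barycenters: measures of the form `∑ᵢ tᵢ δ_{xᵢ}` with
`tᵢ ≥ 0`, `∑ tᵢ = 1`, `xᵢ ∈ X`. -/
def formalBarycenters (X : Type*) [MeasurableSpace X] (k : ℕ) : Set (Measure X) :=
  {μ | ∃ (t : Fin k → ℝ) (x : Fin k → X), (∀ i, 0 ≤ t i) ∧ (∑ i, t i) = 1 ∧
    μ = ∑ i, ENNReal.ofReal (t i) • Measure.dirac (x i)}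

/-! Map every point to a nearest centre by a measurable map `q` (built from
`SimpleFunc.nearestPtInd`). The image of `μ` under `x ∘ q` is the formal barycenter with weights
`μ(q⁻¹{i})`, and for an admissible test function `φ` the integrand `φ - φ ∘ x ∘ q` is at most `s`
on the union of the balls and at most `2` on its complement, whose mass is at most `ε`. -/

open Set Metric

section

variable {X : Type*} [MeasurableSpace X]

theorem dKR_nonneg [MetricSpace X] (μ ν : Measure X) : 0 ≤ dKR μ ν :=
  Real.sSup_nonneg <| by rintro _ ⟨φ, -, -, rfl⟩; exact abs_nonneg _

theorem dKR_le_of_forall_abs_integral_sub_le [MetricSpace X] {μ ν : Measure X} {C : ℝ}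
    (h : ∀ φ : X → ℝ, (∀ x, |φ x| ≤ 1) → LipschitzWith 1 φ →
      |∫ x, φ x ∂μ - ∫ x, φ x ∂ν| ≤ C) :
    dKR μ ν ≤ C :=
  csSup_le ⟨_, fun _ => 0, by simp, LipschitzWith.const' 0, rfl⟩ <| by
    rintro _ ⟨φ, hφ1, hφ, rfl⟩
    exact h φ hφ1 hφ

theorem dKRSet_le_dKR [MetricSpace X] (μ : Measure X) {S : Set (Measure X)} {σ : Measure X}
    (hσ : σ ∈ S) : dKRSet μ S ≤ dKR μ σ :=
  csInf_le ⟨0, by rintro _ ⟨σ', -, rfl⟩; exact dKR_nonneg μ σ'⟩ ⟨σ, hσ, rfl⟩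

theorem exists_measurable_nearest_index [PseudoMetricSpace X] [OpensMeasurableSpace X]
    {k : ℕ} [NeZero k] (x : Fin k → X) :
    ∃ q : X → Fin k, Measurable q ∧ ∀ y i, dist y (x (q y)) ≤ dist y (x i) := by
  let e : ℕ → X := fun n => x (Fin.ofNat k n)
  refine ⟨fun y => Fin.ofNat k (SimpleFunc.nearestPtInd e (k - 1) y),
    (measurable_from_nat (f := Fin.ofNat k)).comp (SimpleFunc.measurable _), fun y i => ?_⟩
  have h := SimpleFunc.edist_nearestPt_le e y (Nat.le_sub_one_of_lt i.isLt)
  rw [dist_comm y, dist_comm y, dist_edist, dist_edist]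
  exact ENNReal.toReal_mono (edist_ne_top _ _) (by simpa [e, SimpleFunc.nearestPt] using h)

theorem map_comp_eq_sum_smul_dirac {ι : Type*} [Fintype ι] [MeasurableSpace ι]
    [DiscreteMeasurableSpace ι] (μ : Measure X) [IsFiniteMeasure μ] {q : X → ι}
    (hq : Measurable q) (x : ι → X) :
    μ.map (x ∘ q) = ∑ i, ENNReal.ofReal (μ.real (q ⁻¹' {i})) • Measure.dirac (x i) := by
  classical
  ext S hS
  rw [Measure.map_apply (Measurable.of_discrete.comp hq) hS]
  simp only [Measure.coe_finsetSum, Finset.sum_apply, Measure.smul_apply,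
    Measure.dirac_apply' _ hS, smul_eq_mul]
  have hS' : x ⁻¹' S = ↑(Finset.univ.filter fun i => x i ∈ S) := by ext; simp
  rw [preimage_comp, hS', ← sum_measure_preimage_singleton _
    fun i _ => hq (.of_discrete (s := {i})), Finset.sum_filter]
  refine Finset.sum_congr rfl fun i _ => ?_
  by_cases h : x i ∈ S <;> simp [h]

theorem abs_integral_sub_integral_map_le [MetricSpace X] [OpensMeasurableSpace X]
    {μ : Measure X} [IsProbabilityMeasure μ] {φ : X → ℝ} (hφ1 : ∀ x, |φ x| ≤ 1)
    (hφ : LipschitzWith 1 φ) {f : X → X} (hf : Measurable f) {U : Set X}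
    (hU : MeasurableSet U) {s : ℝ} (hs : 0 ≤ s) (hfU : ∀ y ∈ U, dist y (f y) ≤ s) :
    |∫ y, φ y ∂μ - ∫ y, φ y ∂(μ.map f)| ≤ s + 2 * μ.real Uᶜ := by
  have hφm := hφ.continuous.measurable
  have hφi : Integrable φ μ :=
    .of_bound hφm.aestronglyMeasurable 1 (.of_forall fun y => hφ1 y)
  have hφfi : Integrable (fun y => φ (f y)) μ :=
    .of_bound (hφm.comp hf).aestronglyMeasurable 1 (.of_forall fun y => hφ1 (f y))
  have hgi : Integrable (fun y => s + Uᶜ.indicator (fun _ => (2 : ℝ)) y) μ :=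
    (integrable_const s).add ((integrable_const 2).indicator hU.compl)
  have hpt : ∀ y, |φ y - φ (f y)| ≤ s + Uᶜ.indicator (fun _ => (2 : ℝ)) y := by
    intro y
    by_cases hy : y ∈ U
    · rw [indicator_of_notMem (notMem_compl_iff.2 hy), add_zero, ← Real.dist_eq]
      simpa using (hφ.dist_le_mul y (f y)).trans (by simpa using hfU y hy)
    · rw [indicator_of_mem (mem_compl hy)]
      have := abs_sub (φ y) (φ (f y))
      linarith [hφ1 y, hφ1 (f y)]
  calc |∫ y, φ y ∂μ - ∫ y, φ y ∂(μ.map f)|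
      = |∫ y, (φ y - φ (f y)) ∂μ| := by
        rw [integral_map hf.aemeasurable hφm.aestronglyMeasurable, integral_sub hφi hφfi]
    _ ≤ ∫ y, (s + Uᶜ.indicator (fun _ => (2 : ℝ)) y) ∂μ :=
        (Real.norm_eq_abs _).symm.trans_le (norm_integral_le_of_norm_le hgi (.of_forall hpt))
    _ = s + 2 * μ.real Uᶜ := by
        rw [integral_add (integrable_const s) ((integrable_const 2).indicator hU.compl),
          integral_indicator_const _ hU.compl]
        simp [mul_comm]

end

theorem dKR_le_of_mass_on_balls_general (X : Type*) [MetricSpace X]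
    [MeasurableSpace X] [BorelSpace X]
    (μ : Measure X) [IsProbabilityMeasure μ] (k : ℕ) (x : Fin k → X)
    (s ε : ℝ) (hs : 0 < s) (hε1 : ε < 1)
    (hmass : ENNReal.ofReal (1 - ε) ≤ μ (⋃ i, Metric.ball (x i) s)) :
    ∃ t : Fin k → ℝ, (∀ i, 0 ≤ t i) ∧ (∑ i, t i) = 1 ∧
      dKR μ (∑ i, ENNReal.ofReal (t i) • Measure.dirac (x i)) ≤ 2 * ε + s ∧
      dKRSet μ (formalBarycenters X k) ≤ 2 * ε + s := by
  -- for `k = 0` the union of balls is empty, so `hmass` forces `1 ≤ ε`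
  have : NeZero k := ⟨by rintro rfl; simp at hmass; linarith⟩
  obtain ⟨q, hq, hq_nearest⟩ := exists_measurable_nearest_index x
  set U := ⋃ i, ball (x i) s
  have hU : MeasurableSet U := .iUnion fun _ => measurableSet_ball
  have hq_near : ∀ y ∈ U, dist y (x (q y)) ≤ s := fun y hy => by
    obtain ⟨i, hi⟩ := mem_iUnion.1 hy
    exact (hq_nearest y i).trans (mem_ball.1 hi).le
  have hUc : μ.real Uᶜ ≤ ε := by
    have := (ENNReal.ofReal_le_iff_le_toReal (measure_ne_top μ U)).1 hmass
    rw [probReal_compl_eq_one_sub hU]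
    linarith [measureReal_def μ U]
  set t : Fin k → ℝ := fun i => μ.real (q ⁻¹' {i})
  have ht1 : ∑ i, t i = 1 := by
    rw [sum_measureReal_preimage_singleton _ fun i _ => hq (.of_discrete (s := {i}))]
    simp
  have hσ : μ.map (x ∘ q) = ∑ i, ENNReal.ofReal (t i) • Measure.dirac (x i) :=
    map_comp_eq_sum_smul_dirac μ hq x
  have hdKR : dKR μ (μ.map (x ∘ q)) ≤ 2 * ε + s :=
    dKR_le_of_forall_abs_integral_sub_le fun φ hφ1 hφ =>
      (abs_integral_sub_integral_map_le hφ1 hφ (Measurable.of_discrete.comp hq) hU hs.le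
        hq_near).trans (by linarith)
  have hmem : μ.map (x ∘ q) ∈ formalBarycenters X k :=
    ⟨t, x, fun _ => measureReal_nonneg, ht1, hσ⟩
  exact ⟨t, fun _ => measureReal_nonneg, ht1, hσ ▸ hdKR, (dKRSet_le_dKR μ hmem).trans hdKR⟩

/-- if a Borel probability measure `μ` on a compact metric space gives mass at
least `1 − ε` to a union of `k` balls of radius `s`, then there is a formal barycenter
`σ = ∑ tᵢ δ_{xᵢ}` supported at the centres with `d_KR(μ,σ) ≤ 2ε + s`; in particular
`d_KR(μ, Σ_k) ≤ 2ε + s`. -/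
theorem dKR_le_of_mass_on_balls (X : Type*) [MetricSpace X] [CompactSpace X]
    [MeasurableSpace X] [BorelSpace X]
    (μ : Measure X) [IsProbabilityMeasure μ] (k : ℕ) (x : Fin k → X)
    (s ε : ℝ) (hs : 0 < s) (hε0 : 0 < ε) (hε1 : ε < 1)
    (hmass : ENNReal.ofReal (1 - ε) ≤ μ (⋃ i, Metric.ball (x i) s)) :
    ∃ t : Fin k → ℝ, (∀ i, 0 ≤ t i) ∧ (∑ i, t i) = 1 ∧
      dKR μ (∑ i, ENNReal.ofReal (t i) • Measure.dirac (x i)) ≤ 2 * ε + s ∧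
      dKRSet μ (formalBarycenters X k) ≤ 2 * ε + s :=
  dKR_le_of_mass_on_balls_general X μ k x s ε hs hε1 hmass
end
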